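/- arXiv:1411.2639 — 10 statements merged into one kernel-verified Lean document; each statement's English description precedes it below -/
import Mathlib

section
/- Let V be an 𝔽₂-vector space with linear maps d, ι : V → V satisfying d∘d = 0, ι∘ι = id, and d∘ι = ι∘d. If (V, d) is acyclic, i.e. ker d = im d, then the group-cohomology complex C(ℤ/2;V) is acyclic: the kernel of the differential D, where (Df)ₙ = d(fₙ) + fₙ₋₁ + ι(fₙ₋₁) on sequences f : ℕ → V, equals the image of D. -/
/-- The differential of the group-cohomology complex `C(ℤ/2; V)`:
on sequences `f : ℕ → V` (formal power series `Σ fₙ hⁿ`), it is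
`(Df)ₙ = d(fₙ) + fₙ₋₁ + ι(fₙ₋₁)`, with the convention `f₋₁ = 0`. -/
def grpD {V : Type*} [AddCommGroup V] [Module (ZMod 2) V]
    (d ι : V →ₗ[ZMod 2] V) (f : ℕ → V) : ℕ → V
  | 0 => d (f 0)
  | (n + 1) => d (f (n + 1)) + f n + ι (f n)

/-- If `(V, d)` is an acyclic ℤ/2-complex, then the group-cohomology complex
`C(ℤ/2; V)` is acyclic: the kernel of its differential equals its image. -/
theorem stmt0 {V : Type*} [AddCommGroup V] [Module (ZMod 2) V]
    (d ι : V →ₗ[ZMod 2] V)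
    (hdd : d ∘ₗ d = 0) (hii : ι ∘ₗ ι = LinearMap.id) (hdi : d ∘ₗ ι = ι ∘ₗ d)
    (hac : LinearMap.ker d = LinearMap.range d) :
    {f : ℕ → V | grpD d ι f = 0} = Set.range (grpD d ι) := by
  classical
  have h2 : ∀ v : V, v + v = 0 := by
    intro v
    have h : (2 : ZMod 2) • v = v + v := two_smul _ v
    have h0 : (2 : ZMod 2) = 0 := rfl
    rw [h0, zero_smul] at h
    exact h.symm
  have h2z : ∀ v : V, (2 : ℤ) • v = 0 := fun v => by
    rw [two_smul]; exact h2 v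
  have hd2 : ∀ v, d (d v) = 0 := fun v => by
    simpa using LinearMap.ext_iff.mp hdd v
  have hii2 : ∀ v, ι (ι v) = v := fun v => by
    simpa using LinearMap.ext_iff.mp hii v
  have hdi2 : ∀ v, d (ι v) = ι (d v) := fun v => by
    simpa using LinearMap.ext_iff.mp hdi v
  have cancel : ∀ a b : V, a + b = 0 → a = b := by
    intro a b h
    calc a = a + (b + b) := by rw [h2 b, add_zero]
      _ = (a + b) + b := by abel
      _ = b := by rw [h, zero_add]
  have hsec : ∀ x, d x = 0 → ∃ y, d y = x := by
    intro x hx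
    have hx' : x ∈ LinearMap.ker d := hx
    rw [hac] at hx'
    exact hx'
  let s : V → V := fun x => if h : ∃ y, d y = x then h.choose else 0
  have hs : ∀ x, d x = 0 → d (s x) = x := by
    intro x hx
    have h : ∃ y, d y = x := hsec x hx
    simp only [s, dif_pos h]
    exact h.choose_spec
  ext f
  simp only [Set.mem_setOf_eq, Set.mem_range]
  constructor
  · intro hf
    have h0 : d (f 0) = 0 := by simpa [grpD] using congrFun hf 0
    have hstep : ∀ n, d (f (n + 1)) = f n + ι (f n) := by
      intro n
      have h := congrFun hf (n + 1)
      simp only [grpD, Pi.zero_apply] at h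
      rw [add_assoc] at h
      exact cancel _ _ h
    set g : ℕ → V := fun n =>
      Nat.rec (s (f 0)) (fun n gn => s (f (n + 1) + gn + ι gn)) n with hg_def
    have hg0 : d (g 0) = f 0 := hs _ h0
    have hg : ∀ n, d (g (n + 1)) = f (n + 1) + g n + ι (g n) := by
      intro n
      induction n with
      | zero =>
        refine hs (f (0 + 1) + g 0 + ι (g 0)) ?_
        rw [map_add, map_add, hdi2, hg0, hstep 0]
        clear hg_def; clear_value g
        abel_nf <;> simp only [h2z, add_zero, zero_add]
      | succ n ih =>
        refine hs (f (n + 1 + 1) + g (n + 1) + ι (g (n + 1))) ?_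
        rw [map_add, map_add, hdi2, ih, hstep (n + 1)]
        rw [show ι (f (n + 1) + g n + ι (g n)) =
            ι (f (n + 1)) + ι (g n) + g n by rw [map_add, map_add, hii2]]
        clear hg_def; clear_value g
        abel_nf <;> simp only [h2z, add_zero, zero_add]
    refine ⟨g, funext fun n => ?_⟩
    cases n with
    | zero => simpa [grpD] using hg0
    | succ n =>
      show d (g (n + 1)) + g n + ι (g n) = f (n + 1)
      rw [hg n]
      clear hg_def; clear_value g
      abel_nf <;> simp only [h2z, add_zero, zero_add]
  · rintro ⟨g, rfl⟩
    funext n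
    match n with
    | 0 => simp [grpD, hd2]
    | 1 =>
      show d (d (g 1) + g 0 + ι (g 0)) + d (g 0) + ι (d (g 0)) = 0
      rw [map_add, map_add, hd2, hdi2]
      abel_nf <;> simp only [h2z, add_zero, zero_add]
    | (n + 2) =>
      show d (d (g (n + 2)) + g (n + 1) + ι (g (n + 1)))
          + (d (g (n + 1)) + g n + ι (g n))
          + ι (d (g (n + 1)) + g n + ι (g n)) = 0
      rw [map_add, map_add, hd2, hdi2, map_add, map_add, hii2]
      abel_nf <;> simp only [h2z, add_zero, zero_add]
end

section
/- Let V be an 𝔽₂-vector space and d : V → V linear with d∘d = 0 and ker d = im d (acyclicity). Let Dⱼ : V → V (j ≥ 0) be a family of linear maps with D₀ = d, and define D on sequences f : ℕ → V by (Df)ₙ = Σ_{j=0}^{n} Dⱼ(f_{n−j}). If D∘D = 0, then ker D = im D. -/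
/-- The convolution operator on sequences `f : ℕ → V` (formal power series
`Σ fₙ hⁿ`) determined by a family of linear maps `Dⱼ`:
`(Df)ₙ = Σ_{j=0}^{n} Dⱼ(f_{n−j})`. -/
def convD {V : Type*} [AddCommGroup V] [Module (ZMod 2) V]
    (D : ℕ → (V →ₗ[ZMod 2] V)) (f : ℕ → V) : ℕ → V :=
  fun n => ∑ j ∈ Finset.range (n + 1), D j (f (n - j))

lemma convD_sub {V : Type*} [AddCommGroup V] [Module (ZMod 2) V]
    (D : ℕ → (V →ₗ[ZMod 2] V)) (f g : ℕ → V) :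
    convD D (f - g) = convD D f - convD D g := by
  funext n
  simp [convD, Finset.sum_sub_distrib]

open Classical in
/-- Degree-by-degree construction of a preimage under `convD D`. -/
noncomputable def auxg {V : Type*} [AddCommGroup V] [Module (ZMod 2) V]
    (d : V →ₗ[ZMod 2] V) (D : ℕ → (V →ₗ[ZMod 2] V)) (f : ℕ → V) : ℕ → V
  | n =>
    if h : ∃ y, d y = f n - ∑ j ∈ (Finset.range n).attach,
        D (j.1 + 1) (auxg d D f (n - (j.1 + 1))) then h.choose else 0
termination_by n => n
decreasing_by
  all_goals
    have := Finset.mem_range.mp j.2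
    simp_wf
    omega

lemma auxg_spec {V : Type*} [AddCommGroup V] [Module (ZMod 2) V]
    (d : V →ₗ[ZMod 2] V) (D : ℕ → (V →ₗ[ZMod 2] V)) (f : ℕ → V) (n : ℕ)
    (h : ∃ y, d y = f n - ∑ j ∈ (Finset.range n).attach,
        D (j.1 + 1) (auxg d D f (n - (j.1 + 1)))) :
    d (auxg d D f n) = f n - ∑ j ∈ (Finset.range n).attach,
        D (j.1 + 1) (auxg d D f (n - (j.1 + 1))) := by
  rw [auxg, dif_pos h]
  exact h.choose_spec

/-- If `d` is a square-zero acyclic differential on `V`, and `D` is a square-zero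
convolution operator on `V[[h]]` whose constant (`h⁰`) term is `d`, then
`ker D = im D`. -/
theorem stmt1 {V : Type*} [AddCommGroup V] [Module (ZMod 2) V]
    (d : V →ₗ[ZMod 2] V) (hdd : d ∘ₗ d = 0)
    (hac : LinearMap.ker d = LinearMap.range d)
    (D : ℕ → (V →ₗ[ZMod 2] V)) (hD0 : D 0 = d)
    (hDD : ∀ f : ℕ → V, convD D (convD D f) = 0) :
    {f : ℕ → V | convD D f = 0} = Set.range (convD D) := by
  ext f
  simp only [Set.mem_setOf_eq, Set.mem_range]
  constructor
  · intro hf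
    have hattach : ∀ n : ℕ, ∑ j ∈ (Finset.range n).attach,
        D (j.1 + 1) (auxg d D f (n - (j.1 + 1)))
        = ∑ j ∈ Finset.range n, D (j + 1) (auxg d D f (n - (j + 1))) := fun n =>
      Finset.sum_attach (Finset.range n)
        (fun j => D (j + 1) (auxg d D f (n - (j + 1))))
    have key : ∀ n, d (auxg d D f n)
        = f n - ∑ j ∈ Finset.range n, D (j + 1) (auxg d D f (n - (j + 1))) := by
      intro n
      induction n using Nat.strong_induction_on with
      | _ n ih =>
        set g' : ℕ → V := fun m => if m < n then auxg d D f m else 0 with hg'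
        have hDg' : ∀ m < n, convD D g' m = f m := by
          intro m hm
          have hcongr : ∀ j ∈ Finset.range (m + 1),
              D j (g' (m - j)) = D j (auxg d D f (m - j)) := by
            intro j hj
            have : m - j < n := lt_of_le_of_lt (Nat.sub_le m j) hm
            simp [hg', this]
          simp only [convD]
          rw [Finset.sum_congr rfl hcongr, Finset.sum_range_succ']
          simp only [Nat.sub_zero, hD0]
          rw [ih m hm]
          abel
        have hu0 : ∀ m < n, (f - convD D g') m = 0 := by
          intro m hm
          simp [Pi.sub_apply, hDg' m hm]
        have hDu : convD D (f - convD D g') = 0 := by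
          rw [convD_sub, hf, hDD g', sub_zero]
        have h1 : convD D (f - convD D g') n = 0 := congrFun hDu n
        have h2 : d ((f - convD D g') n) = 0 := by
          simp only [convD] at h1
          rw [Finset.sum_range_succ'] at h1
          have hz : ∀ j ∈ Finset.range n,
              D (j + 1) ((f - convD D g') (n - (j + 1))) = 0 := by
            intro j hj
            have hjn := Finset.mem_range.mp hj
            rw [hu0 _ (by omega), map_zero]
          rw [Finset.sum_congr rfl hz, Finset.sum_const_zero, zero_add] at h1
          simpa [hD0] using h1
        have h3 : (f - convD D g') n
            = f n - ∑ j ∈ Finset.range n, D (j + 1) (auxg d D f (n - (j + 1))) := by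
          simp only [Pi.sub_apply, convD]
          rw [Finset.sum_range_succ']
          have hgn : g' n = 0 := by simp [hg']
          have hcongr : ∀ j ∈ Finset.range n,
              D (j + 1) (g' (n - (j + 1))) = D (j + 1) (auxg d D f (n - (j + 1))) := by
            intro j hj
            have hjn := Finset.mem_range.mp hj
            have : n - (j + 1) < n := by omega
            simp [hg', this]
          rw [Finset.sum_congr rfl hcongr]
          simp [hgn]
        have hex : ∃ y, d y
            = f n - ∑ j ∈ Finset.range n, D (j + 1) (auxg d D f (n - (j + 1))) := by
          have hker : (f n - ∑ j ∈ Finset.range n,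
              D (j + 1) (auxg d D f (n - (j + 1)))) ∈ LinearMap.ker d := by
            rw [LinearMap.mem_ker, ← h3]
            exact h2
          rw [hac] at hker
          exact hker
        have hex' : ∃ y, d y = f n - ∑ j ∈ (Finset.range n).attach,
            D (j.1 + 1) (auxg d D f (n - (j.1 + 1))) := by
          rw [hattach n]; exact hex
        have := auxg_spec d D f n hex'
        rw [hattach n] at this
        exact this
    refine ⟨auxg d D f, ?_⟩
    funext n
    simp only [convD]
    rw [Finset.sum_range_succ']
    simp only [Nat.sub_zero, hD0]
    rw [key n]
    abel
  · rintro ⟨g, rfl⟩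
    exact hDD g
end

section
/- Let V be an 𝔽₂-vector space with linear maps d, ι : V → V satisfying d∘d = 0, ι∘ι = id, d∘ι = ι∘d. Suppose the homology H(V) = ker d / im d is finite-dimensional over 𝔽₂. Then the cohomology of the group-cohomology complex C(ℤ/2;V) is finitely generated over 𝔽₂[[h]]: there exist finitely many sequences u₁, …, u_r : ℕ → V with D(u_k) = 0 such that every f : ℕ → V with Df = 0 can be written as f = (γ₁ ⋆ u₁) + ⋯ + (γ_r ⋆ u_r) + Dw for some γ₁, …, γ_r : ℕ → 𝔽₂ and some w : ℕ → V, where (γ ⋆ u)ₙ = Σ_{j=0}^{n} γⱼ • u_{n−j}. -/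
/-- The action of a scalar `γ ∈ 𝔽₂[[h]]` (a sequence `ℕ → 𝔽₂`) on a sequence
`u : ℕ → V`, by convolution: `(γ ⋆ u)ₙ = Σ_{j=0}^{n} γⱼ • u_{n−j}`. -/
def scalConv {V : Type*} [AddCommGroup V] [Module (ZMod 2) V]
    (γ : ℕ → ZMod 2) (u : ℕ → V) : ℕ → V :=
  fun n => ∑ j ∈ Finset.range (n + 1), γ j • u (n - j)

section Aux
variable {V : Type*} [AddCommGroup V] [Module (ZMod 2) V]

lemma c2_add_self (x : V) : x + x = 0 := by
  have h2 : (2 : ZMod 2) = 0 := by decide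
  calc x + x = (2 : ZMod 2) • x := (two_smul _ x).symm
    _ = 0 := by rw [h2, zero_smul]

lemma c2_eq_of {x y : V} (h : x + y = 0) : x = y := by
  rw [← add_zero x, ← c2_add_self y, ← add_assoc, h, zero_add]

lemma c2_of_eq {x y : V} (h : x = y) : x + y = 0 := by
  rw [h]; exact c2_add_self y

lemma grpD_zero (d ι : V →ₗ[ZMod 2] V) (g : ℕ → V) : grpD d ι g 0 = d (g 0) := rfl

lemma grpD_succ (d ι : V →ₗ[ZMod 2] V) (g : ℕ → V) (n : ℕ) :
    grpD d ι g (n+1) = d (g (n+1)) + g n + ι (g n) := rfl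

lemma coc_iff (d ι : V →ₗ[ZMod 2] V) (g : ℕ → V) :
    grpD d ι g = 0 ↔ d (g 0) = 0 ∧ ∀ n, d (g (n+1)) = g n + ι (g n) := by
  constructor
  · intro h
    refine ⟨congrFun h 0, fun n => ?_⟩
    have h1 : d (g (n+1)) + g n + ι (g n) = 0 := congrFun h (n+1)
    rw [add_assoc] at h1
    exact c2_eq_of h1
  · rintro ⟨h0, hs⟩
    funext n
    cases n with
    | zero => exact h0
    | succ n =>
      show d (g (n+1)) + g n + ι (g n) = 0
      rw [hs n, add_assoc]
      exact c2_add_self _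

lemma step_coc (d ι : V →ₗ[ZMod 2] V) (hdi : ∀ x, d (ι x) = ι (d x))
    (hii : ∀ x, ι (ι x) = x)
    (g z : ℕ → V) (hg : grpD d ι g = 0) (hz : grpD d ι z = 0)
    (b : V) (hb : g 0 = z 0 + d b) :
    grpD d ι (fun m => g (m+1) + z (m+1) + (if m = 0 then b + ι b else 0)) = 0 := by
  rw [coc_iff] at hg hz ⊢
  obtain ⟨hg0, hgs⟩ := hg
  obtain ⟨hz0, hzs⟩ := hz
  constructor
  · simp only [if_pos rfl, map_add, hgs 0, hzs 0, hdi, hb]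
    try simp only [map_add, hdi, hii]
    try abel_nf
    try simp only [map_add, hdi, hii]
    try abel_nf
    try simp only [two_nsmul, two_zsmul, c2_add_self, zero_add, add_zero]
    try abel
  · intro m
    cases m with
    | zero =>
      simp only [if_pos rfl, if_neg (Nat.succ_ne_zero 0), map_add, hgs 1, hzs 1, hii, add_zero]
      try simp only [map_add, hdi, hii]
      try abel_nf
      try simp only [map_add, hdi, hii]
      try abel_nf
      try simp only [two_nsmul, two_zsmul, c2_add_self, zero_add, add_zero]
      try abel
    | succ m =>
      simp only [if_neg (Nat.succ_ne_zero m), if_neg (Nat.succ_ne_zero (m+1)), map_add,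
        hgs (m+2), hzs (m+2), add_zero]
      try simp only [map_add, hdi, hii]
      try abel_nf
      try simp only [map_add, hdi, hii]
      try abel_nf
      try simp only [two_nsmul, two_zsmul, c2_add_self, zero_add, add_zero]
      try abel

end Aux

/-- If the homology `H(V) = ker d / im d` of a ℤ/2-complex is finite-dimensional
over `𝔽₂`, then the cohomology of `C(ℤ/2; V)` is a finitely generated
`𝔽₂[[h]]`-module: there are finitely many cocycles `u₁, …, u_r` such that every
cocycle is an `𝔽₂[[h]]`-combination of them plus a coboundary. -/
theorem stmt2 {V : Type*} [AddCommGroup V] [Module (ZMod 2) V]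
    (d ι : V →ₗ[ZMod 2] V)
    (hdd : d ∘ₗ d = 0) (hii : ι ∘ₗ ι = LinearMap.id) (hdi : d ∘ₗ ι = ι ∘ₗ d)
    (hfin : FiniteDimensional (ZMod 2)
      (↥(LinearMap.ker d) ⧸
        Submodule.comap (LinearMap.ker d).subtype (LinearMap.range d))) :
    ∃ (r : ℕ) (u : Fin r → (ℕ → V)),
      (∀ k, grpD d ι (u k) = 0) ∧
      ∀ f : ℕ → V, grpD d ι f = 0 →
        ∃ (γ : Fin r → (ℕ → ZMod 2)) (w : ℕ → V),
          f = (∑ k, scalConv (γ k) (u k)) + grpD d ι w := by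
  classical
  have hii' : ∀ x, ι (ι x) = x := fun x => LinearMap.ext_iff.mp hii x
  have hdi' : ∀ x, d (ι x) = ι (d x) := fun x => LinearMap.ext_iff.mp hdi x
  set N := Submodule.comap (LinearMap.ker d).subtype (LinearMap.range d) with hN
  have hker : ∀ {g : ℕ → V}, grpD d ι g = 0 → g 0 ∈ LinearMap.ker d := by
    intro g hg
    rw [LinearMap.mem_ker]
    exact ((coc_iff d ι g).1 hg).1
  haveI : Finite (↥(LinearMap.ker d) ⧸ N) := Module.finite_of_finite (ZMod 2)
  set S : Set (↥(LinearMap.ker d) ⧸ N) :=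
    {x | ∃ g, ∃ hg : grpD d ι g = 0, x = N.mkQ ⟨g 0, hker hg⟩} with hS
  obtain ⟨r, ⟨e⟩⟩ := Finite.exists_equiv_fin S
  have hrep : ∀ s : S, ∃ g, ∃ hg : grpD d ι g = 0, (s : _) = N.mkQ ⟨g 0, hker hg⟩ :=
    fun s => s.2
  choose F hF hFeq using hrep
  set u : Fin r → (ℕ → V) := fun k => F (e.symm k) with hu
  have hu0 : ∀ k, grpD d ι (u k) = 0 := fun k => hF _
  -- division step existence
  have hex : ∀ g, (hg : grpD d ι g = 0) → ∃ k : Fin r, ∃ b : V, g 0 = u k 0 + d b := by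
    intro g hg
    have hmemS : N.mkQ ⟨g 0, hker hg⟩ ∈ S := ⟨g, hg, rfl⟩
    set s : S := ⟨N.mkQ ⟨g 0, hker hg⟩, hmemS⟩ with hs
    refine ⟨e s, ?_⟩
    have h1 : N.mkQ ⟨g 0, hker hg⟩ = N.mkQ ⟨F s 0, hker (hF s)⟩ := hFeq s
    have h2 : (⟨g 0, hker hg⟩ - ⟨F s 0, hker (hF s)⟩ : LinearMap.ker d) ∈ N :=
      (Submodule.Quotient.eq N).1 h1
    rw [hN, Submodule.mem_comap] at h2
    obtain ⟨b, hb⟩ := h2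
    refine ⟨b, ?_⟩
    have hb' : d b = g 0 - F s 0 := hb
    have : u (e s) = F s := by rw [hu]; simp
    rw [this, hb']
    abel
  refine ⟨r, u, hu0, ?_⟩
  intro f hf
  -- the recursion
  have hex' : ∀ g : {g : ℕ → V // grpD d ι g = 0},
      ∃ kb : Fin r × V, g.1 0 = u kb.1 0 + d kb.2 := by
    rintro ⟨g, hg⟩
    obtain ⟨k, b, h⟩ := hex g hg
    exact ⟨(k, b), h⟩
  choose sel hsel using hex'
  set step : {g : ℕ → V // grpD d ι g = 0} → {g : ℕ → V // grpD d ι g = 0} := fun g =>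
    ⟨fun m => g.1 (m+1) + u (sel g).1 (m+1) + (if m = 0 then (sel g).2 + ι ((sel g).2) else 0),
     step_coc d ι hdi' hii' g.1 (u (sel g).1) g.2 (hu0 _) (sel g).2 (hsel g)⟩ with hstep
  set G : ℕ → {g : ℕ → V // grpD d ι g = 0} := fun n => step^[n] ⟨f, hf⟩ with hG
  have hG0 : (G 0).1 = f := rfl
  have hGs : ∀ n, G (n+1) = step (G n) := by
    intro n
    rw [hG]
    exact Function.iterate_succ_apply' step n ⟨f, hf⟩
  set k : ℕ → Fin r := fun n => (sel (G n)).1 with hk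
  set b : ℕ → V := fun n => (sel (G n)).2 with hb
  have hhead : ∀ n, (G n).1 0 = u (k n) 0 + d (b n) := fun n => hsel (G n)
  have hrec : ∀ n m, (G (n+1)).1 m
      = (G n).1 (m+1) + u (k n) (m+1) + (if m = 0 then b n + ι (b n) else 0) := by
    intro n m
    rw [hGs n]
  have hP : ∀ n m, (G (n+1)).1 m
      = f (n+1+m) + (∑ j ∈ Finset.range (n+1), u (k j) (n+1+m-j))
        + (if m = 0 then b n + ι (b n) else 0) := by
    intro n
    induction n with
    | zero =>
      intro m
      rw [hrec 0 m]
      have h0 : (G 0).1 (m+1) = f (m+1) := by rw [hG0]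
      have h1 : 0 + 1 + m = m + 1 := by omega
      rw [h0, Finset.sum_range_one, h1, Nat.sub_zero]
    | succ n ih =>
      intro m
      rw [hrec (n+1) m, ih (m+1), if_neg (Nat.succ_ne_zero m), add_zero]
      conv_rhs => rw [Finset.sum_range_succ]
      have h1 : n + 1 + (m + 1) = n + 1 + 1 + m := by omega
      have h3 : n + 1 + 1 + m - (n + 1) = m + 1 := by omega
      have h4 : (∑ j ∈ Finset.range (n+1), u (k j) (n+1+(m+1)-j))
          = ∑ j ∈ Finset.range (n+1), u (k j) (n+1+1+m-j) :=
        Finset.sum_congr rfl fun j _ => by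
          have h5 : n + 1 + (m + 1) - j = n + 1 + 1 + m - j := by omega
          rw [h5]
      rw [h4, h1, h3]
      abel
  refine ⟨fun K => fun j => if k j = K then 1 else 0, fun n => b n, ?_⟩
  funext n
  have hsum : (∑ K, scalConv (fun j => if k j = K then 1 else 0) (u K)) n
      = ∑ j ∈ Finset.range (n+1), u (k j) (n - j) := by
    rw [Finset.sum_apply]
    simp only [scalConv]
    rw [Finset.sum_comm]
    refine Finset.sum_congr rfl fun j hj => ?_
    simp [ite_smul]
  rw [Pi.add_apply, hsum]
  cases n with
  | zero =>
    show f 0 = _ + grpD d ι (fun n => b n) 0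
    have : grpD d ι (fun n => b n) 0 = d (b 0) := rfl
    rw [this, Finset.sum_range_one]
    have := hhead 0
    rw [hG0] at this
    simpa using this
  | succ n =>
    show f (n+1) = _ + grpD d ι (fun n => b n) (n+1)
    have hw : grpD d ι (fun n => b n) (n+1) = d (b (n+1)) + b n + ι (b n) := rfl
    rw [hw, Finset.sum_range_succ, Nat.sub_self]
    have h1 := hP n 0
    rw [if_pos rfl, Nat.add_zero] at h1
    have h2 := hhead (n+1)
    -- h1 : (G (n+1)).1 0 = f (n+1) + Σ_{j<n+1} u (k j) (n+1-j) + (b n + ι (b n))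
    -- h2 : (G (n+1)).1 0 = u (k (n+1)) 0 + d (b (n+1))
    have h3 : f (n+1) + (∑ j ∈ Finset.range (n+1), u (k j) (n+1-j)) + (b n + ι (b n))
        = u (k (n+1)) 0 + d (b (n+1)) := by rw [← h1, ← h2]
    have h4 := c2_of_eq h3
    refine c2_eq_of ?_
    calc f (n+1) + ((∑ j ∈ Finset.range (n+1), u (k j) (n+1-j)) + u (k (n+1)) 0
          + (d (b (n+1)) + b n + ι (b n)))
        = (f (n+1) + (∑ j ∈ Finset.range (n+1), u (k j) (n+1-j)) + (b n + ι (b n)))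
          + (u (k (n+1)) 0 + d (b (n+1))) := by abel
      _ = 0 := h4
end

section
/- Let V₁ and V₂ be 𝔽₂-vector spaces, each equipped with linear maps d_k, ι_k (k = 1,2) satisfying d_k∘d_k = 0, ι_k∘ι_k = id, d_k∘ι_k = ι_k∘d_k. Let φ : V₁ → V₂ be linear with φ∘d₁ = d₂∘φ and φ∘ι₁ = ι₂∘φ, and suppose φ induces an isomorphism ker d₁/im d₁ → ker d₂/im d₂. Then the coefficientwise map Φ : (ℕ → V₁) → (ℕ → V₂), (Φf)ₙ = φ(fₙ), induces an isomorphism on the cohomology of the group-cohomology complexes: (a) for every g with D₂g = 0 there exists f with D₁f = 0 and Φf + g ∈ im D₂; (b) if D₁f = 0 and Φf ∈ im D₂ then f ∈ im D₁. -/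
section aux
variable {V : Type*} [AddCommGroup V] [Module (ZMod 2) V]

lemma char2 (v : V) : v + v = 0 := by
  have h : (2 : ZMod 2) • v = 0 := by
    have h2 : (2 : ZMod 2) = 0 := by decide
    rw [h2, zero_smul]
  rwa [two_smul] at h

lemma char2' (a b : V) (h : a + b = 0) : a = b := by
  have hb := char2 b
  calc a = a + (b + b) := by rw [hb, add_zero]
  _ = (a + b) + b := by abel
  _ = b := by rw [h, zero_add]

lemma add3 (a b c : V) (h : a + b + c = 0) : a = b + c :=
  char2' _ _ (by rw [← add_assoc]; exact h)

end aux

theorem exists_seq {α : Type*} (P : ℕ → α → Prop) (R : ℕ → α → α → Prop)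
    (h0 : ∃ a, P 0 a) (hstep : ∀ n a, P n a → ∃ b, P (n+1) b ∧ R n a b) :
    ∃ F : ℕ → α, (∀ n, P n (F n)) ∧ (∀ n, R n (F n) (F (n+1))) := by
  choose a ha using h0
  choose g hg1 hg2 using hstep
  let F : ∀ n, {x : α // P n x} :=
    fun n => Nat.rec ⟨a, ha⟩ (fun n p => ⟨g n p.1 p.2, hg1 n p.1 p.2⟩) n
  exact ⟨fun n => (F n).1, fun n => (F n).2, fun n => hg2 n (F n).1 (F n).2⟩

/-- An equivariant chain map `φ` between ℤ/2-complexes which induces an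
isomorphism on homology also induces an isomorphism on the cohomology of the
group-cohomology complexes: (a) coefficientwise `Φ` is surjective on cohomology,
and (b) injective on cohomology. -/
theorem stmt3 {V₁ V₂ : Type*} [AddCommGroup V₁] [Module (ZMod 2) V₁]
    [AddCommGroup V₂] [Module (ZMod 2) V₂]
    (d₁ ι₁ : V₁ →ₗ[ZMod 2] V₁) (d₂ ι₂ : V₂ →ₗ[ZMod 2] V₂)
    (hdd₁ : d₁ ∘ₗ d₁ = 0) (hii₁ : ι₁ ∘ₗ ι₁ = LinearMap.id) (hdi₁ : d₁ ∘ₗ ι₁ = ι₁ ∘ₗ d₁)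
    (hdd₂ : d₂ ∘ₗ d₂ = 0) (hii₂ : ι₂ ∘ₗ ι₂ = LinearMap.id) (hdi₂ : d₂ ∘ₗ ι₂ = ι₂ ∘ₗ d₂)
    (φ : V₁ →ₗ[ZMod 2] V₂)
    (hφd : φ ∘ₗ d₁ = d₂ ∘ₗ φ) (hφι : φ ∘ₗ ι₁ = ι₂ ∘ₗ φ)
    -- φ is surjective on homology:
    (hsurj : ∀ y : V₂, d₂ y = 0 → ∃ x : V₁, d₁ x = 0 ∧ ∃ z : V₂, φ x + y = d₂ z)
    -- φ is injective on homology: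
    (hinj : ∀ x : V₁, d₁ x = 0 → (∃ z : V₂, φ x = d₂ z) → ∃ w : V₁, x = d₁ w) :
    -- (a) the induced map on group cohomology is surjective:
    (∀ g : ℕ → V₂, grpD d₂ ι₂ g = 0 →
      ∃ f : ℕ → V₁, grpD d₁ ι₁ f = 0 ∧
        ∃ z : ℕ → V₂, (fun n => φ (f n)) + g = grpD d₂ ι₂ z) ∧
    -- (b) the induced map on group cohomology is injective:
    (∀ f : ℕ → V₁, grpD d₁ ι₁ f = 0 →
      (∃ z : ℕ → V₂, (fun n => φ (f n)) = grpD d₂ ι₂ z) →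
      ∃ w : ℕ → V₁, f = grpD d₁ ι₁ w) := by

  have hii₁' : ∀ v, ι₁ (ι₁ v) = v := fun v => LinearMap.congr_fun hii₁ v
  have hdi₁' : ∀ v, d₁ (ι₁ v) = ι₁ (d₁ v) := fun v => LinearMap.congr_fun hdi₁ v
  have hii₂' : ∀ v, ι₂ (ι₂ v) = v := fun v => LinearMap.congr_fun hii₂ v
  have hdi₂' : ∀ v, d₂ (ι₂ v) = ι₂ (d₂ v) := fun v => LinearMap.congr_fun hdi₂ v
  have hφd' : ∀ v, φ (d₁ v) = d₂ (φ v) := fun v => LinearMap.congr_fun hφd v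
  have hφι' : ∀ v, φ (ι₁ v) = ι₂ (φ v) := fun v => LinearMap.congr_fun hφι v
  constructor
  · -- part (a)
    intro g hg
    have hg0 : d₂ (g 0) = 0 := congrFun hg 0
    have hgs : ∀ n, d₂ (g (n+1)) + g n + ι₂ (g n) = 0 := fun n => congrFun hg (n+1)
    obtain ⟨F, hP, hR⟩ := exists_seq
      (P := fun n (p : V₁ × V₂) => d₁ (p.1 + ι₁ p.1) = 0 ∧
        (φ p.1 + g n + d₂ p.2) + ι₂ (φ p.1 + g n + d₂ p.2) = 0 ∧
        (n = 0 → d₁ p.1 = 0 ∧ φ p.1 + g 0 = d₂ p.2))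
      (R := fun n p q => d₁ q.1 = p.1 + ι₁ p.1 ∧
        φ q.1 + g (n+1) = d₂ q.2 + (p.2 + ι₂ p.2))
      (by
        -- base
        obtain ⟨x, hx, z, hz⟩ := hsurj (g 0) hg0
        refine ⟨(x, z), ?_, ?_, fun _ => ⟨hx, hz⟩⟩
        · show d₁ (x + ι₁ x) = 0
          rw [map_add, hdi₁', hx, map_zero, add_zero]
        · show (φ x + g 0 + d₂ z) + ι₂ (φ x + g 0 + d₂ z) = 0
          rw [hz, char2, map_zero, add_zero])
      (by
        -- step
        rintro n ⟨fn, zn⟩ ⟨h1, h2, -⟩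
        have e2 : φ fn + ι₂ (φ fn) = g n + ι₂ (g n) + (d₂ zn + ι₂ (d₂ zn)) := by
          apply char2'
          calc φ fn + ι₂ (φ fn) + (g n + ι₂ (g n) + (d₂ zn + ι₂ (d₂ zn)))
              = (φ fn + g n + d₂ zn) + ι₂ (φ fn + g n + d₂ zn) := by
                simp only [map_add]; abel
            _ = 0 := h2
        have e1 : d₂ (g (n+1)) = g n + ι₂ (g n) := add3 _ _ _ (hgs n)
        have hb : φ (fn + ι₁ fn) = d₂ (g (n+1) + (zn + ι₂ zn)) := by
          calc φ (fn + ι₁ fn) = φ fn + ι₂ (φ fn) := by rw [map_add, hφι']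
            _ = g n + ι₂ (g n) + (d₂ zn + ι₂ (d₂ zn)) := e2
            _ = d₂ (g (n+1)) + (d₂ zn + ι₂ (d₂ zn)) := by rw [e1]
            _ = d₂ (g (n+1) + (zn + ι₂ zn)) := by rw [map_add, map_add, hdi₂']
        obtain ⟨w, hw⟩ := hinj (fn + ι₁ fn) h1 ⟨g (n+1) + (zn + ι₂ zn), hb⟩
        have hc : d₂ (φ w + g (n+1) + (zn + ι₂ zn)) = 0 := by
          calc d₂ (φ w + g (n+1) + (zn + ι₂ zn))
              = d₂ (φ w) + (d₂ (g (n+1)) + (d₂ zn + ι₂ (d₂ zn))) := by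
                simp only [map_add]; rw [hdi₂']; abel
            _ = φ (d₁ w) + (d₂ (g (n+1)) + (d₂ zn + ι₂ (d₂ zn))) := by rw [hφd']
            _ = φ (fn + ι₁ fn) + (d₂ (g (n+1)) + (d₂ zn + ι₂ (d₂ zn))) := by rw [← hw]
            _ = d₂ (g (n+1) + (zn + ι₂ zn)) + (d₂ (g (n+1)) + (d₂ zn + ι₂ (d₂ zn))) := by
                rw [hb]
            _ = (d₂ (g (n+1)) + (d₂ zn + ι₂ (d₂ zn)))
                + (d₂ (g (n+1)) + (d₂ zn + ι₂ (d₂ zn))) := by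
                simp only [map_add]; rw [hdi₂']
            _ = 0 := char2 _
        obtain ⟨x, hx, z', hz'⟩ := hsurj _ hc
        have hq1 : d₁ (w + x) = fn + ι₁ fn := by rw [map_add, hx, add_zero, ← hw]
        have hq2 : φ (w + x) + g (n+1) = d₂ z' + (zn + ι₂ zn) := by
          apply char2'
          calc φ (w + x) + g (n+1) + (d₂ z' + (zn + ι₂ zn))
              = (φ x + (φ w + g (n+1) + (zn + ι₂ zn))) + d₂ z' := by rw [map_add]; abel
            _ = d₂ z' + d₂ z' := by rw [hz']
            _ = 0 := char2 _
        refine ⟨(w + x, z'), ⟨?_, ?_, by simp⟩, hq1, hq2⟩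
        · show d₁ ((w + x) + ι₁ (w + x)) = 0
          calc d₁ ((w + x) + ι₁ (w + x)) = d₁ (w + x) + ι₁ (d₁ (w + x)) := by
                rw [map_add, hdi₁']
            _ = (fn + ι₁ fn) + ι₁ (fn + ι₁ fn) := by rw [hq1]
            _ = (fn + fn) + (ι₁ fn + ι₁ fn) := by rw [map_add, hii₁']; abel
            _ = 0 := by rw [char2, char2, add_zero]
        · show (φ (w + x) + g (n+1) + d₂ z') + ι₂ (φ (w + x) + g (n+1) + d₂ z') = 0
          have he : φ (w + x) + g (n+1) + d₂ z' = zn + ι₂ zn := by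
            apply char2'
            calc φ (w + x) + g (n+1) + d₂ z' + (zn + ι₂ zn)
                = (φ (w + x) + g (n+1)) + (d₂ z' + (zn + ι₂ zn)) := by abel
              _ = (d₂ z' + (zn + ι₂ zn)) + (d₂ z' + (zn + ι₂ zn)) := by rw [hq2]
              _ = 0 := char2 _
          rw [he, map_add, hii₂',
            show zn + ι₂ zn + (ι₂ zn + zn) = (zn + zn) + (ι₂ zn + ι₂ zn) from by abel,
            char2, char2, add_zero])
    refine ⟨fun n => (F n).1, ?_, fun n => (F n).2, ?_⟩
    · funext n
      cases n with
      | zero => exact ((hP 0).2.2 rfl).1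
      | succ n =>
        show d₁ ((F (n+1)).1) + (F n).1 + ι₁ ((F n).1) = 0
        rw [(hR n).1,
          show (F n).1 + ι₁ ((F n).1) + (F n).1 + ι₁ ((F n).1)
            = ((F n).1 + (F n).1) + (ι₁ ((F n).1) + ι₁ ((F n).1)) from by abel,
          char2, char2, add_zero]
    · funext n
      cases n with
      | zero => exact ((hP 0).2.2 rfl).2
      | succ n =>
        show φ ((F (n+1)).1) + g (n+1) = d₂ ((F (n+1)).2) + (F n).2 + ι₂ ((F n).2)
        rw [(hR n).2, add_assoc]
  · -- part (b)
    intro f hf hz'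
    obtain ⟨z, hz⟩ := hz'
    have hf0 : d₁ (f 0) = 0 := congrFun hf 0
    have hfs : ∀ n, d₁ (f (n+1)) + f n + ι₁ (f n) = 0 := fun n => congrFun hf (n+1)
    have hz0 : φ (f 0) = d₂ (z 0) := congrFun hz 0
    have hzs : ∀ n, φ (f (n+1)) = d₂ (z (n+1)) + z n + ι₂ (z n) := fun n => congrFun hz (n+1)
    obtain ⟨F, hP, hR⟩ := exists_seq
      (P := fun n (p : V₁ × V₂) =>
        (d₁ p.1 + f n) + ι₁ (d₁ p.1 + f n) = 0 ∧
        (φ p.1 + z n + d₂ p.2) + ι₂ (φ p.1 + z n + d₂ p.2) = 0 ∧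
        (n = 0 → f 0 = d₁ p.1))
      (R := fun n p q => f (n+1) = d₁ q.1 + p.1 + ι₁ p.1)
      (by
        -- base
        obtain ⟨w', hw'⟩ := hinj (f 0) hf0 ⟨z 0, hz0⟩
        have hc : d₂ (φ w' + z 0) = 0 := by
          calc d₂ (φ w' + z 0) = d₂ (φ w') + d₂ (z 0) := by rw [map_add]
            _ = φ (d₁ w') + d₂ (z 0) := by rw [hφd']
            _ = φ (f 0) + d₂ (z 0) := by rw [← hw']
            _ = d₂ (z 0) + d₂ (z 0) := by rw [hz0]
            _ = 0 := char2 _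
        obtain ⟨x, hx, u, hu⟩ := hsurj _ hc
        have hb1 : d₁ (w' + x) = f 0 := by rw [map_add, hx, add_zero, ← hw']
        have hb2 : φ (w' + x) + z 0 = d₂ u := by
          apply char2'
          calc φ (w' + x) + z 0 + d₂ u = (φ x + (φ w' + z 0)) + d₂ u := by
                rw [map_add]; abel
            _ = d₂ u + d₂ u := by rw [hu]
            _ = 0 := char2 _
        refine ⟨(w' + x, u), ?_, ?_, fun _ => hb1.symm⟩
        · show (d₁ (w' + x) + f 0) + ι₁ (d₁ (w' + x) + f 0) = 0
          rw [hb1, char2, map_zero, add_zero]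
        · show (φ (w' + x) + z 0 + d₂ u) + ι₂ (φ (w' + x) + z 0 + d₂ u) = 0
          rw [hb2, char2, map_zero, add_zero])
      (by
        -- step
        rintro n ⟨wn, un⟩ ⟨h1, h2, -⟩
        have e1 : d₁ (f (n+1)) = f n + ι₁ (f n) := add3 _ _ _ (hfs n)
        have e2 : φ wn + ι₂ (φ wn) = z n + ι₂ (z n) + (d₂ un + ι₂ (d₂ un)) := by
          apply char2'
          calc φ wn + ι₂ (φ wn) + (z n + ι₂ (z n) + (d₂ un + ι₂ (d₂ un)))
              = (φ wn + z n + d₂ un) + ι₂ (φ wn + z n + d₂ un) := by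
                simp only [map_add]; abel
            _ = 0 := h2
        have ha : d₁ (f (n+1) + (wn + ι₁ wn)) = 0 := by
          calc d₁ (f (n+1) + (wn + ι₁ wn))
              = d₁ (f (n+1)) + (d₁ wn + ι₁ (d₁ wn)) := by
                simp only [map_add]; rw [hdi₁']
            _ = (f n + ι₁ (f n)) + (d₁ wn + ι₁ (d₁ wn)) := by rw [e1]
            _ = (d₁ wn + f n) + ι₁ (d₁ wn + f n) := by rw [map_add]; abel
            _ = 0 := h1
        have hφa : φ (f (n+1) + (wn + ι₁ wn)) = d₂ (z (n+1) + (un + ι₂ un)) := by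
          calc φ (f (n+1) + (wn + ι₁ wn))
              = φ (f (n+1)) + (φ wn + ι₂ (φ wn)) := by rw [map_add, map_add, hφι']
            _ = (d₂ (z (n+1)) + z n + ι₂ (z n))
                + (z n + ι₂ (z n) + (d₂ un + ι₂ (d₂ un))) := by rw [hzs n, e2]
            _ = d₂ (z (n+1)) + (d₂ un + ι₂ (d₂ un))
                + ((z n + z n) + (ι₂ (z n) + ι₂ (z n))) := by abel
            _ = d₂ (z (n+1)) + (d₂ un + ι₂ (d₂ un)) := by
                rw [char2, char2, add_zero, add_zero]
            _ = d₂ (z (n+1) + (un + ι₂ un)) := by rw [map_add, map_add, hdi₂']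
        obtain ⟨w', hw'⟩ := hinj _ ha ⟨z (n+1) + (un + ι₂ un), hφa⟩
        have hc : d₂ (φ w' + z (n+1) + (un + ι₂ un)) = 0 := by
          calc d₂ (φ w' + z (n+1) + (un + ι₂ un))
              = d₂ (φ w') + (d₂ (z (n+1)) + (d₂ un + ι₂ (d₂ un))) := by
                simp only [map_add]; rw [hdi₂']; abel
            _ = φ (d₁ w') + (d₂ (z (n+1)) + (d₂ un + ι₂ (d₂ un))) := by rw [hφd']
            _ = φ (f (n+1) + (wn + ι₁ wn))
                + (d₂ (z (n+1)) + (d₂ un + ι₂ (d₂ un))) := by rw [← hw']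
            _ = d₂ (z (n+1) + (un + ι₂ un))
                + (d₂ (z (n+1)) + (d₂ un + ι₂ (d₂ un))) := by rw [hφa]
            _ = (d₂ (z (n+1)) + (d₂ un + ι₂ (d₂ un)))
                + (d₂ (z (n+1)) + (d₂ un + ι₂ (d₂ un))) := by
                simp only [map_add]; rw [hdi₂']
            _ = 0 := char2 _
        obtain ⟨x, hx, u', hu'⟩ := hsurj _ hc
        have hr1 : d₁ (w' + x) + wn + ι₁ wn = f (n+1) := by
          calc d₁ (w' + x) + wn + ι₁ wn = d₁ w' + wn + ι₁ wn := by
                rw [map_add, hx, add_zero]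
            _ = (f (n+1) + (wn + ι₁ wn)) + wn + ι₁ wn := by rw [← hw']
            _ = f (n+1) + ((wn + wn) + (ι₁ wn + ι₁ wn)) := by abel
            _ = f (n+1) := by rw [char2, char2, add_zero, add_zero]
        have hk : φ (w' + x) + z (n+1) + (un + ι₂ un) = d₂ u' := by
          apply char2'
          calc φ (w' + x) + z (n+1) + (un + ι₂ un) + d₂ u'
              = (φ x + (φ w' + z (n+1) + (un + ι₂ un))) + d₂ u' := by rw [map_add]; abel
            _ = d₂ u' + d₂ u' := by rw [hu']
            _ = 0 := char2 _
        refine ⟨(w' + x, u'), ⟨?_, ?_, by simp⟩, hr1.symm⟩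
        · show (d₁ (w' + x) + f (n+1)) + ι₁ (d₁ (w' + x) + f (n+1)) = 0
          have hd : d₁ (w' + x) + f (n+1) = wn + ι₁ wn := by
            apply char2'
            calc d₁ (w' + x) + f (n+1) + (wn + ι₁ wn)
                = (d₁ (w' + x) + wn + ι₁ wn) + f (n+1) := by abel
              _ = f (n+1) + f (n+1) := by rw [hr1]
              _ = 0 := char2 _
          rw [hd, map_add, hii₁',
            show wn + ι₁ wn + (ι₁ wn + wn) = (wn + wn) + (ι₁ wn + ι₁ wn) from by abel,
            char2, char2, add_zero]
        · show (φ (w' + x) + z (n+1) + d₂ u') + ι₂ (φ (w' + x) + z (n+1) + d₂ u') = 0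
          have he : φ (w' + x) + z (n+1) + d₂ u' = un + ι₂ un := by
            apply char2'
            calc φ (w' + x) + z (n+1) + d₂ u' + (un + ι₂ un)
                = (φ (w' + x) + z (n+1) + (un + ι₂ un)) + d₂ u' := by abel
              _ = d₂ u' + d₂ u' := by rw [hk]
              _ = 0 := char2 _
          rw [he, map_add, hii₂',
            show un + ι₂ un + (ι₂ un + un) = (un + un) + (ι₂ un + ι₂ un) from by abel,
            char2, char2, add_zero])
    refine ⟨fun n => (F n).1, ?_⟩
    funext n
    cases n with
    | zero => exact (hP 0).2.2 rfl
    | succ n =>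
      show f (n+1) = d₁ ((F (n+1)).1) + (F n).1 + ι₁ ((F n).1)
      exact hR n
end

section
/- Let V₁, V₂ be 𝔽₂-vector spaces with square-zero linear maps d₁, d₂. For k = 1,2 let D^{(k)}ⱼ : V_k → V_k (j ≥ 0) be linear maps with D^{(k)}₀ = d_k, and define D^{(k)} on sequences ℕ → V_k by convolution, (D^{(k)}f)ₙ = Σ_{j=0}^{n} D^{(k)}ⱼ(f_{n−j}); assume D^{(k)}∘D^{(k)} = 0. Let Φⱼ : V₁ → V₂ (j ≥ 0) be linear maps and Φ the convolution map (Φf)ₙ = Σ_{j=0}^{n} Φⱼ(f_{n−j}); assume Φ∘D^{(1)} = D^{(2)}∘Φ. If Φ₀ : (V₁, d₁) → (V₂, d₂) induces an isomorphism ker d₁/im d₁ → ker d₂/im d₂, then Φ induces an isomorphism between ker D^{(1)}/im D^{(1)} and ker D^{(2)}/im D^{(2)}: (a) for every g with D^{(2)}g = 0 there exists f with D^{(1)}f = 0 and Φf + g ∈ im D^{(2)}; (b) if D^{(1)}f = 0 and Φf ∈ im D^{(2)} then f ∈ im D^{(1)}. -/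
set_option linter.unusedSectionVars false
set_option linter.unusedVariables false

/-- The convolution operator on sequences `f : ℕ → V` determined by a family of
linear maps `Dⱼ`: `(Df)ₙ = Σ_{j=0}^{n} Dⱼ(f_{n−j})`. -/
def convOp {V W : Type*} [AddCommGroup V] [Module (ZMod 2) V]
    [AddCommGroup W] [Module (ZMod 2) W]
    (D : ℕ → (V →ₗ[ZMod 2] W)) (f : ℕ → V) : ℕ → W :=
  fun n => ∑ j ∈ Finset.range (n + 1), D j (f (n - j))

noncomputable def natSeq {α : Type*} (step : (n : ℕ) → ((m : ℕ) → m < n → α) → α) : ℕ → α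
  | n => step n (fun m _ => natSeq step m)
  termination_by n => n

lemma natSeq_eq {α : Type*} (step : (n : ℕ) → ((m : ℕ) → m < n → α) → α) (n : ℕ) :
    natSeq step n = step n (fun m _ => natSeq step m) := by
  rw [natSeq]

section
variable {W : Type*} [AddCommGroup W] [Module (ZMod 2) W]

lemma ch2 (x : W) : x + x = 0 := by
  have h : (2 : ZMod 2) • x = 0 := by
    rw [show (2 : ZMod 2) = 0 from rfl, zero_smul]
  simpa [two_smul] using h

lemma ch2_nsmul (x : W) : (2:ℕ) • x = 0 := by rw [two_nsmul]; exact ch2 x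
lemma ch2_zsmul (x : W) : (2:ℤ) • x = 0 := by rw [two_zsmul]; exact ch2 x

lemma ch2_eq {x y : W} (h : x + y = 0) : x = y := by
  calc x = x + (y + y) := by rw [ch2, add_zero]
  _ = (x + y) + y := (add_assoc x y y).symm
  _ = y := by rw [h, zero_add]

lemma ch2_eq' {x y : W} (h : x = y) : x + y = 0 := by rw [h]; exact ch2 y

lemma ch2_move {a t b : W} (h : a = t + b) : b = a + t := by
  rw [h, add_comm t b, add_assoc, ch2, add_zero]
end

section
variable {V W : Type*} [AddCommGroup V] [Module (ZMod 2) V]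
    [AddCommGroup W] [Module (ZMod 2) W]

def tailSum (D : ℕ → (V →ₗ[ZMod 2] W)) (s : ℕ → V) (n : ℕ) : W :=
  ∑ i ∈ Finset.range n, D (i+1) (s (n - (i+1)))

def trunc (n : ℕ) (s : ℕ → V) : ℕ → V := fun m => if m < n then s m else 0

lemma convOp_eq_tail (D : ℕ → (V →ₗ[ZMod 2] W)) (s : ℕ → V) (n : ℕ) :
    convOp D s n = tailSum D s n + D 0 (s n) := by
  rw [convOp, Finset.sum_range_succ']
  simp [tailSum]

lemma convOp_congr (D : ℕ → (V →ₗ[ZMod 2] W)) {s t : ℕ → V} {n : ℕ}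
    (h : ∀ m, m ≤ n → s m = t m) : convOp D s n = convOp D t n := by
  unfold convOp
  exact Finset.sum_congr rfl fun j hj => by rw [h _ (by omega)]

lemma trunc_lt {n m : ℕ} (s : ℕ → V) (h : m < n) : trunc n s m = s m := if_pos h

lemma convOp_trunc (D : ℕ → (V →ₗ[ZMod 2] W)) (s : ℕ → V) {m n : ℕ} (h : m < n) :
    convOp D (trunc n s) m = convOp D s m :=
  convOp_congr D fun k hk => trunc_lt s (by omega)

lemma tailSum_congr (D : ℕ → (V →ₗ[ZMod 2] W)) {s t : ℕ → V} {n : ℕ}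
    (h : ∀ m, m < n → s m = t m) : tailSum D s n = tailSum D t n := by
  unfold tailSum
  refine Finset.sum_congr rfl fun i hi => ?_
  rw [h _ (by simp at hi; omega)]

lemma convOp_trunc_self (D : ℕ → (V →ₗ[ZMod 2] W)) (s : ℕ → V) (n : ℕ) :
    convOp D (trunc n s) n = tailSum D s n := by
  rw [convOp_eq_tail, show trunc n s n = 0 from if_neg (lt_irrefl n), map_zero, add_zero]
  exact tailSum_congr D fun m hm => trunc_lt s hm

lemma tailSum_add (D : ℕ → (V →ₗ[ZMod 2] W)) (s t : ℕ → V) (n : ℕ) :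
    tailSum D s n + tailSum D t n = tailSum D (fun m => s m + t m) n := by
  unfold tailSum
  rw [← Finset.sum_add_distrib]
  exact Finset.sum_congr rfl fun i _ => (map_add _ _ _).symm

lemma convOp_zero (D : ℕ → (V →ₗ[ZMod 2] W)) : convOp D (fun _ => 0) = 0 := by
  funext n; simp [convOp]
end
set_option maxHeartbeats 1000000 in
lemma mainLemma {V₁ V₂ : Type*} [AddCommGroup V₁] [Module (ZMod 2) V₁]
    [AddCommGroup V₂] [Module (ZMod 2) V₂]
    (D₁ : ℕ → (V₁ →ₗ[ZMod 2] V₁)) (D₂ : ℕ → (V₂ →ₗ[ZMod 2] V₂))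
    (Φ : ℕ → (V₁ →ₗ[ZMod 2] V₂))
    (hDD₁ : ∀ f : ℕ → V₁, convOp D₁ (convOp D₁ f) = 0)
    (hDD₂ : ∀ f : ℕ → V₂, convOp D₂ (convOp D₂ f) = 0)
    (hchain : ∀ f : ℕ → V₁, convOp Φ (convOp D₁ f) = convOp D₂ (convOp Φ f))
    (cone : ∀ (x : V₁) (y : V₂), D₁ 0 x = 0 → Φ 0 x = D₂ 0 y →
      ∃ a b, D₁ 0 a = x ∧ Φ 0 a + D₂ 0 b = y)
    (G₁ : ℕ → V₁) (G₂ : ℕ → V₂)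
    (hG₁ : convOp D₁ G₁ = 0) (hG : ∀ n, convOp Φ G₁ n + convOp D₂ G₂ n = 0) :
    ∃ (f : ℕ → V₁) (z : ℕ → V₂),
      (∀ n, convOp D₁ f n = G₁ n) ∧ (∀ n, convOp Φ f n + convOp D₂ z n = G₂ n) := by
  classical
  have exis : ∀ (x : V₁) (y : V₂), ∃ a b,
      (D₁ 0 x = 0 → Φ 0 x = D₂ 0 y → D₁ 0 a = x ∧ Φ 0 a + D₂ 0 b = y) := by
    intro x y
    by_cases h1 : D₁ 0 x = 0 ∧ Φ 0 x = D₂ 0 y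
    · obtain ⟨a, b, h⟩ := cone x y h1.1 h1.2
      exact ⟨a, b, fun _ _ => h⟩
    · exact ⟨0, 0, fun ha hb => absurd ⟨ha, hb⟩ h1⟩
  choose A B hAB using exis
  set step : (n : ℕ) → ((m : ℕ) → m < n → V₁ × V₂) → V₁ × V₂ := fun n p =>
    (A (G₁ n + convOp D₁ (fun m => if h : m < n then (p m h).1 else 0) n)
       (G₂ n + convOp Φ (fun m => if h : m < n then (p m h).1 else 0) n
         + convOp D₂ (fun m => if h : m < n then (p m h).2 else 0) n),
     B (G₁ n + convOp D₁ (fun m => if h : m < n then (p m h).1 else 0) n)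
       (G₂ n + convOp Φ (fun m => if h : m < n then (p m h).1 else 0) n
         + convOp D₂ (fun m => if h : m < n then (p m h).2 else 0) n)) with hstep
  set F : ℕ → V₁ × V₂ := natSeq step with hF
  set f : ℕ → V₁ := fun n => (F n).1 with hf
  set z : ℕ → V₂ := fun n => (F n).2 with hz
  have htr1 : ∀ n, (fun m => if h : m < n then ((fun m (_ : m < n) => F m) m h).1 else 0)
      = trunc n f := by
    intro n; funext m
    by_cases h : m < n <;> simp [trunc, h, hf]
  have htr2 : ∀ n, (fun m => if h : m < n then ((fun m (_ : m < n) => F m) m h).2 else 0)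
      = trunc n z := by
    intro n; funext m
    by_cases h : m < n <;> simp [trunc, h, hz]
  have hFn : ∀ n, F n =
      (A (G₁ n + convOp D₁ (trunc n f) n)
         (G₂ n + convOp Φ (trunc n f) n + convOp D₂ (trunc n z) n),
       B (G₁ n + convOp D₁ (trunc n f) n)
         (G₂ n + convOp Φ (trunc n f) n + convOp D₂ (trunc n z) n)) := by
    intro n
    rw [hF, natSeq_eq, hstep]
    simp only []
    rw [htr1 n, htr2 n]
  have key : ∀ n, convOp D₁ f n = G₁ n ∧ convOp Φ f n + convOp D₂ z n = G₂ n := by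
    intro n
    induction n using Nat.strong_induction_on with
    | _ n IH =>
      set x := G₁ n + convOp D₁ (trunc n f) n with hx
      set y := G₂ n + convOp Φ (trunc n f) n + convOp D₂ (trunc n z) n with hy
      have hf'IH : ∀ m, m < n → convOp D₁ (trunc n f) m = G₁ m := fun m hm =>
        (convOp_trunc D₁ f hm).trans (IH m hm).1
      have hzfIH : ∀ m, m < n →
          convOp Φ (trunc n f) m + convOp D₂ (trunc n z) m = G₂ m := fun m hm => by
        rw [convOp_trunc Φ f hm, convOp_trunc D₂ z hm]; exact (IH m hm).2
      -- d₁ x = 0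
      have hdx : D₁ 0 x = 0 := by
        have e1 : D₁ 0 (G₁ n) = tailSum D₁ G₁ n := by
          have h := congrFun hG₁ n
          rw [convOp_eq_tail, Pi.zero_apply, add_comm] at h
          exact ch2_eq h
        have e2 : D₁ 0 (convOp D₁ (trunc n f) n) = tailSum D₁ (convOp D₁ (trunc n f)) n := by
          have h := congrFun (hDD₁ (trunc n f)) n
          rw [convOp_eq_tail, Pi.zero_apply, add_comm] at h
          exact ch2_eq h
        have e3 : tailSum D₁ (convOp D₁ (trunc n f)) n = tailSum D₁ G₁ n :=
          tailSum_congr D₁ hf'IH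
        rw [hx, map_add, e1, e2, e3]
        exact ch2 _
      -- Φ 0 x = d₂ y
      have hxy : Φ 0 x = D₂ 0 y := by
        apply ch2_eq
        have e1 : Φ 0 (G₁ n) + tailSum Φ G₁ n = convOp Φ G₁ n := by
          rw [convOp_eq_tail]; exact add_comm _ _
        have e2 : Φ 0 (convOp D₁ (trunc n f) n)
            = convOp D₂ (convOp Φ (trunc n f)) n + tailSum Φ G₁ n := by
          have h := convOp_eq_tail Φ (convOp D₁ (trunc n f)) n
          rw [hchain] at h
          have := ch2_move h
          rw [this, tailSum_congr Φ hf'IH]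
        have e3 : D₂ 0 (convOp Φ (trunc n f) n)
            = convOp D₂ (convOp Φ (trunc n f)) n + tailSum D₂ (convOp Φ (trunc n f)) n := by
          exact ch2_move (convOp_eq_tail D₂ (convOp Φ (trunc n f)) n)
        have e4 : D₂ 0 (convOp D₂ (trunc n z) n) = tailSum D₂ (convOp D₂ (trunc n z)) n := by
          have h := convOp_eq_tail D₂ (convOp D₂ (trunc n z)) n
          rw [congrFun (hDD₂ (trunc n z)) n] at h
          simpa using ch2_move h
        have e5 : D₂ 0 (G₂ n) = convOp D₂ G₂ n + tailSum D₂ G₂ n :=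
          ch2_move (convOp_eq_tail D₂ G₂ n)
        have e6 : tailSum D₂ (convOp Φ (trunc n f)) n + tailSum D₂ (convOp D₂ (trunc n z)) n
            = tailSum D₂ G₂ n := by
          rw [tailSum_add]; exact tailSum_congr D₂ hzfIH
        rw [hx, hy, map_add, map_add, map_add, e2, e3, e4, e5]
        have e7 : Φ 0 (G₁ n) + (convOp D₂ (convOp Φ (trunc n f)) n + tailSum Φ G₁ n)
            + (convOp D₂ G₂ n + tailSum D₂ G₂ n
              + (convOp D₂ (convOp Φ (trunc n f)) n + tailSum D₂ (convOp Φ (trunc n f)) n)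
              + tailSum D₂ (convOp D₂ (trunc n z)) n)
            = (Φ 0 (G₁ n) + tailSum Φ G₁ n + convOp D₂ G₂ n)
              + (convOp D₂ (convOp Φ (trunc n f)) n + convOp D₂ (convOp Φ (trunc n f)) n)
              + (tailSum D₂ G₂ n
                + (tailSum D₂ (convOp Φ (trunc n f)) n
                  + tailSum D₂ (convOp D₂ (trunc n z)) n)) := by abel
        rw [e7, e6, ch2, add_zero, ch2, add_zero]
        rw [e1]
        exact hG n
      obtain ⟨ha, hb⟩ := hAB x y hdx hxy
      have hfn : f n = A x y := by show (F n).1 = A x y; rw [hFn n]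
      have hzn : z n = B x y := by show (F n).2 = B x y; rw [hFn n]
      constructor
      · rw [convOp_eq_tail, ← convOp_trunc_self D₁ f n, hfn, ha, hx]
        have : convOp D₁ (trunc n f) n + (G₁ n + convOp D₁ (trunc n f) n)
            = G₁ n + (convOp D₁ (trunc n f) n + convOp D₁ (trunc n f) n) := by abel
        rw [this, ch2, add_zero]
      · rw [convOp_eq_tail Φ f n, convOp_eq_tail D₂ z n,
          ← convOp_trunc_self Φ f n, ← convOp_trunc_self D₂ z n, hfn, hzn]
        have : convOp Φ (trunc n f) n + Φ 0 (A x y)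
            + (convOp D₂ (trunc n z) n + D₂ 0 (B x y))
            = (Φ 0 (A x y) + D₂ 0 (B x y))
              + (convOp Φ (trunc n f) n + convOp D₂ (trunc n z) n) := by abel
        rw [this, hb, hy]
        have : G₂ n + convOp Φ (trunc n f) n + convOp D₂ (trunc n z) n
            + (convOp Φ (trunc n f) n + convOp D₂ (trunc n z) n)
            = G₂ n + ((convOp Φ (trunc n f) n + convOp Φ (trunc n f) n)
              + (convOp D₂ (trunc n z) n + convOp D₂ (trunc n z) n)) := by abel
        rw [this, ch2, ch2, add_zero, add_zero]
  exact ⟨f, z, fun n => (key n).1, fun n => (key n).2⟩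

/-- A chain map of convolution-type between square-zero convolution operators,
whose constant term is a quasi-isomorphism, induces an isomorphism between
`ker D⁽¹⁾/im D⁽¹⁾` and `ker D⁽²⁾/im D⁽²⁾`. -/
theorem stmt4 {V₁ V₂ : Type*} [AddCommGroup V₁] [Module (ZMod 2) V₁]
    [AddCommGroup V₂] [Module (ZMod 2) V₂]
    (d₁ : V₁ →ₗ[ZMod 2] V₁) (d₂ : V₂ →ₗ[ZMod 2] V₂)
    (hdd₁ : d₁ ∘ₗ d₁ = 0) (hdd₂ : d₂ ∘ₗ d₂ = 0)
    (D₁ : ℕ → (V₁ →ₗ[ZMod 2] V₁)) (hD₁0 : D₁ 0 = d₁)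
    (D₂ : ℕ → (V₂ →ₗ[ZMod 2] V₂)) (hD₂0 : D₂ 0 = d₂)
    (hDD₁ : ∀ f : ℕ → V₁, convOp D₁ (convOp D₁ f) = 0)
    (hDD₂ : ∀ f : ℕ → V₂, convOp D₂ (convOp D₂ f) = 0)
    (Φ : ℕ → (V₁ →ₗ[ZMod 2] V₂))
    (hchain : ∀ f : ℕ → V₁, convOp Φ (convOp D₁ f) = convOp D₂ (convOp Φ f))
    -- Φ₀ is surjective on homology:
    (hsurj : ∀ y : V₂, d₂ y = 0 → ∃ x : V₁, d₁ x = 0 ∧ ∃ z : V₂, Φ 0 x + y = d₂ z)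
    -- Φ₀ is injective on homology:
    (hinj : ∀ x : V₁, d₁ x = 0 → (∃ z : V₂, Φ 0 x = d₂ z) → ∃ w : V₁, x = d₁ w) :
    -- (a) Φ is surjective on the cohomology of the convolution complexes:
    (∀ g : ℕ → V₂, convOp D₂ g = 0 →
      ∃ f : ℕ → V₁, convOp D₁ f = 0 ∧
        ∃ z : ℕ → V₂, convOp Φ f + g = convOp D₂ z) ∧
    -- (b) Φ is injective on the cohomology of the convolution complexes:
    (∀ f : ℕ → V₁, convOp D₁ f = 0 →
      (∃ z : ℕ → V₂, convOp Φ f = convOp D₂ z) →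
      ∃ w : ℕ → V₁, f = convOp D₁ w) := by
  -- Φ₀ commutes with the differentials
  have hcomm : ∀ v : V₁, Φ 0 (d₁ v) = d₂ (Φ 0 v) := by
    intro v
    have h := congrFun (hchain (fun _ => v)) 0
    simpa [convOp, hD₁0, hD₂0] using h
  -- the cone of Φ₀ is acyclic
  have cone : ∀ (x : V₁) (y : V₂), D₁ 0 x = 0 → Φ 0 x = D₂ 0 y →
      ∃ a b, D₁ 0 a = x ∧ Φ 0 a + D₂ 0 b = y := by
    rw [hD₁0, hD₂0]
    intro x y hx hxy
    obtain ⟨w, hw⟩ := hinj x hx ⟨y, hxy⟩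
    have h1 : d₂ (y + Φ 0 w) = 0 := by
      rw [map_add, ← hcomm, ← hw, ← hxy]
      exact ch2 _
    obtain ⟨a, ha, b, hb⟩ := hsurj (y + Φ 0 w) h1
    refine ⟨w + a, b, ?_, ?_⟩
    · rw [map_add, ha, add_zero, ← hw]
    · rw [map_add, ← hb]
      have : Φ 0 w + Φ 0 a + (Φ 0 a + (y + Φ 0 w))
          = y + ((Φ 0 a + Φ 0 a) + (Φ 0 w + Φ 0 w)) := by abel
      rw [this, ch2, ch2, add_zero, add_zero]
  constructor
  · intro g hg
    obtain ⟨f, z, h1, h2⟩ := mainLemma D₁ D₂ Φ hDD₁ hDD₂ hchain cone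
      (fun _ => 0) g (convOp_zero D₁)
      (by intro n; rw [convOp_zero, Pi.zero_apply, zero_add, congrFun hg n, Pi.zero_apply])
    refine ⟨f, funext fun n => h1 n, z, funext fun n => ?_⟩
    have h := h2 n
    rw [Pi.add_apply, ch2_move h.symm]
    exact add_comm _ _
  · intro f hf ⟨z, hz⟩
    obtain ⟨w, v, h1, h2⟩ := mainLemma D₁ D₂ Φ hDD₁ hDD₂ hchain cone f z hf
      (fun n => ch2_eq' (congrFun hz n))
    exact ⟨w, funext fun n => (h1 n).symm⟩
end

section
/- Let V be a finite-dimensional 𝔽₂-vector space with linear maps d, ι : V → V satisfying d∘d = 0, ι∘ι = id, d∘ι = ι∘d. Suppose V is the internal direct sum of subspaces V₀, …, V_N with ι(V_i) ⊆ V_i for all i, d(V_i) ⊆ V_{i+1} for i < N and d(V_N) = 0, and suppose for each i there is a subspace W_i ⊆ V_i such that V_i = W_i ⊕ ι(W_i). Then the Tate complex of V is acyclic: on 𝔽₂((h)) ⊗_𝔽₂ V with differential D(a ⊗ v) = a ⊗ d(v) + (h·a) ⊗ (v + ι(v)), one has ker D = im D. -/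
open TensorProduct

instance : SMulCommClass (ZMod 2) (HahnSeries ℤ (ZMod 2)) (HahnSeries ℤ (ZMod 2)) :=
  ⟨fun r x y => (mul_smul_comm r x y).symm⟩

/-- Multiplication by the variable `h` on `𝔽₂((h))`, as an `𝔽₂`-linear map. -/
noncomputable def mulH : LaurentSeries (ZMod 2) →ₗ[ZMod 2] LaurentSeries (ZMod 2) where
  toFun a := (HahnSeries.single (1 : ℤ) (1 : ZMod 2)) * a
  map_add' a b := mul_add _ a b
  map_smul' r a := by simp [mul_smul_comm]

noncomputable def tateDaux {V : Type*} [AddCommGroup V] [Module (ZMod 2) V]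
    (d ι : V →ₗ[ZMod 2] V) :
    ((LaurentSeries (ZMod 2)) ⊗[ZMod 2] V) →ₗ[ZMod 2]
      ((LaurentSeries (ZMod 2)) ⊗[ZMod 2] V) :=
  TensorProduct.map LinearMap.id d + TensorProduct.map mulH (LinearMap.id + ι)

lemma tateDaux_smul {V : Type*} [AddCommGroup V] [Module (ZMod 2) V]
    (d ι : V →ₗ[ZMod 2] V) (c : LaurentSeries (ZMod 2))
    (x : (LaurentSeries (ZMod 2)) ⊗[ZMod 2] V) :
    tateDaux d ι (c • x) = c • tateDaux d ι x := by
  induction x using TensorProduct.induction_on with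
  | zero => simp
  | tmul a v =>
      rw [TensorProduct.smul_tmul']
      simp [tateDaux, mulH, TensorProduct.smul_tmul', smul_eq_mul, smul_add, mul_left_comm]
  | add x y hx hy =>
      rw [smul_add, map_add, hx, hy, map_add, smul_add]

/-- The Tate differential on `𝔽₂((h)) ⊗ V`: the `𝔽₂((h))`-linear map determined by
`D(a ⊗ v) = a ⊗ d(v) + (h·a) ⊗ (v + ι(v))`. -/
noncomputable def tateD {V : Type*} [AddCommGroup V] [Module (ZMod 2) V]
    (d ι : V →ₗ[ZMod 2] V) :
    ((LaurentSeries (ZMod 2)) ⊗[ZMod 2] V) →ₗ[LaurentSeries (ZMod 2)]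
      ((LaurentSeries (ZMod 2)) ⊗[ZMod 2] V) where
  toFun := tateDaux d ι
  map_add' x y := map_add _ x y
  map_smul' c x := tateDaux_smul d ι c x

/-! With `u = 1 + ι`, the Tate differential is `D = 1 ⊗ d + h ⊗ u`. Gluing the splittings
`Vᵢ = Wᵢ ⊕ ι(Wᵢ)` gives a complement `W` of `ι(W)` in `V`, hence an operator `σ` vanishing on `W`
and inverting `ι` on `ι(W)`. In characteristic 2 it satisfies `uσ + σu = 1`, and it preserves every
`Vᵢ`. For `H = h⁻¹ ⊗ σ` one gets `DH + HD = 1 + h⁻¹ ⊗ (dσ + σd)`, where `dσ + σd` raises the index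
`i` and so is nilpotent. Hence `DH + HD` is invertible; as it commutes with `D`, every cycle
`x = D((DH + HD)⁻¹ H x)` is a boundary. -/

theorem LinearMap.ker_eq_range_of_isUnit_homotopy {R M : Type*} [Semiring R] [AddCommMonoid M]
    [Module R M] {D H : Module.End R M} (hDD : D * D = 0) (hunit : IsUnit (D * H + H * D)) :
    LinearMap.ker D = LinearMap.range D := by
  refine le_antisymm (fun x hx => ?_) (LinearMap.range_le_ker_iff.mpr hDD)
  set A := D * H + H * D
  have hDA : Commute D A := by
    simp only [Commute, SemiconjBy, A, mul_add, add_mul, ← mul_assoc, hDD, zero_mul]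
    simp only [mul_assoc, hDD, mul_zero, zero_add, add_zero]
  have hAx : A x = D (H x) := by
    simp [A, LinearMap.mem_ker.mp hx]
  refine ⟨(↑hunit.unit⁻¹ : Module.End R M) (H x), ?_⟩
  rw [← Module.End.mul_apply, (hDA.units_inv_right (u := hunit.unit)).eq, Module.End.mul_apply,
    ← hAx, ← Module.End.mul_apply, IsUnit.val_inv_mul, Module.End.one_apply]

theorem Disjoint.sup_sup_of_le {α : Type*} [Lattice α] [OrderBot α] [IsModularLattice α]
    {a b a' b' v v' : α} (hab : Disjoint a b) (hab' : Disjoint a' b') (hv : Disjoint v v')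
    (hav : a ≤ v) (hbv : b ≤ v) (hav' : a' ≤ v') (hbv' : b' ≤ v') :
    Disjoint (a ⊔ a') (b ⊔ b') := by
  have h₁ : Disjoint a' (b ⊔ b') := by
    rw [sup_comm]
    exact hab'.disjoint_sup_right_of_disjoint_sup_left (hv.symm.mono (sup_le hav' hbv') hbv)
  have h₂ : Disjoint a (a' ⊔ (b ⊔ b')) := by
    rw [sup_left_comm]
    exact hab.disjoint_sup_right_of_disjoint_sup_left (hv.mono (sup_le hav hbv) (sup_le hav' hbv'))
  exact h₁.disjoint_sup_left_of_disjoint_sup_right h₂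

theorem Finset.SupIndep.disjoint_sup_sup_of_le {α ι : Type*} [Lattice α] [OrderBot α]
    [IsModularLattice α] {s : Finset ι} {V A B : ι → α} (hV : s.SupIndep V)
    (hAV : ∀ i ∈ s, A i ≤ V i) (hBV : ∀ i ∈ s, B i ≤ V i) (hAB : ∀ i ∈ s, Disjoint (A i) (B i)) :
    Disjoint (s.sup A) (s.sup B) := by
  induction s using Finset.cons_induction with
  | empty => simp
  | cons j s hj ih =>
    simp only [Finset.mem_cons, forall_eq_or_imp] at hAV hBV hAB
    rw [Finset.sup_cons, Finset.sup_cons]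
    exact hAB.1.sup_sup_of_le (ih (hV.subset (Finset.subset_cons hj)) hAV.2 hBV.2 hAB.2)
      (hV (Finset.subset_cons hj) (Finset.mem_cons_self j s) hj) hAV.1 hBV.1
      (Finset.sup_mono_fun hAV.2) (Finset.sup_mono_fun hBV.2)

section Involution

variable {R M : Type*} [Ring R] [AddCommGroup M] [Module R M] {ι σ : Module.End R M}
  {W : Submodule R M}

theorem IsCompl.exists_eq_zero_and_apply_map_eq (hii : ι * ι = 1) (hW : IsCompl W (W.map ι)) :
    ∃ σ : Module.End R M, (∀ w ∈ W, σ w = 0) ∧ ∀ w ∈ W, σ (ι w) = w := by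
  refine ⟨LinearMap.ofIsCompl hW 0 (ι ∘ₗ (W.map ι).subtype), fun w hw => ?_, fun w hw => ?_⟩
  · exact LinearMap.ofIsCompl_apply_left hW (⟨w, hw⟩ : W)
  · rw [show ι w = ((⟨ι w, Submodule.mem_map_of_mem hw⟩ : W.map ι) : M) from rfl,
      LinearMap.ofIsCompl_apply_right]
    exact LinearMap.congr_fun hii w

theorem apply_mem_of_mem_sup_map {W' : Submodule R M} (hW' : W' ≤ W)
    (hσ₀ : ∀ w ∈ W, σ w = 0) (hσ₁ : ∀ w ∈ W, σ (ι w) = w) {x : M} (hx : x ∈ W' ⊔ W'.map ι) :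
    σ x ∈ W' := by
  obtain ⟨a, ha, _, ⟨b, hb, rfl⟩, rfl⟩ := Submodule.mem_sup.mp hx
  rw [map_add, hσ₀ a (hW' ha), hσ₁ b (hW' hb), zero_add]
  exact hb

end Involution

theorem one_add_mul_add_mul_one_add_eq_one {M : Type*} [AddCommGroup M] [Module (ZMod 2) M]
    {ι σ : Module.End (ZMod 2) M} {W : Submodule (ZMod 2) M} (hii : ι * ι = 1)
    (hW : W ⊔ W.map ι = ⊤) (hσ₀ : ∀ w ∈ W, σ w = 0) (hσ₁ : ∀ w ∈ W, σ (ι w) = w) :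
    (1 + ι) * σ + σ * (1 + ι) = 1 := by
  have hii' : ∀ x, ι (ι x) = x := LinearMap.congr_fun hii
  ext x
  obtain ⟨a, ha, _, ⟨b, hb, rfl⟩, rfl⟩ := Submodule.mem_sup.mp (hW ▸ Submodule.mem_top : x ∈ _)
  simp only [LinearMap.add_apply, Module.End.mul_apply, Module.End.one_apply, map_add, hii',
    hσ₀ a ha, hσ₀ b hb, hσ₁ a ha, hσ₁ b hb, map_zero, zero_add, add_zero]
  rw [add_right_comm b, ZModModule.add_self, zero_add]

theorem Submodule.isCompl_iSup_map {R M κ : Type*} [Ring R] [AddCommGroup M] [Module R M]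
    [Fintype κ] {ι : Module.End R M} {V W : κ → Submodule R M} (hV : iSupIndep V)
    (hVtop : ⨆ i, V i = ⊤) (hWι : ∀ i, Disjoint (W i) ((W i).map ι))
    (hWV : ∀ i, W i ⊔ (W i).map ι = V i) :
    IsCompl (⨆ i, W i) ((⨆ i, W i).map ι) := by
  rw [Submodule.map_iSup]
  constructor
  · rw [← Finset.sup_univ_eq_iSup, ← Finset.sup_univ_eq_iSup]
    exact (hV.supIndep' _).disjoint_sup_sup_of_le (fun i _ => hWV i ▸ le_sup_left)
      (fun i _ => hWV i ▸ le_sup_right) (fun i _ => hWι i)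
  · rw [codisjoint_iff, ← iSup_sup_eq, ← hVtop]
    exact iSup_congr hWV

theorem Module.End.pow_succ_eq_zero_of_mapsTo_succ {R M : Type*} [Semiring R] [AddCommMonoid M]
    [Module R M] {m : Module.End R M} {N : ℕ} {F : ℕ → Submodule R M}
    (htop : ⨆ i : Fin (N + 1), F i = ⊤) (hstep : ∀ i < N, ∀ x ∈ F i, m x ∈ F (i + 1))
    (hlast : ∀ x ∈ F N, m x = 0) :
    m ^ (N + 1) = 0 := by
  have hkill : ∀ k ≤ N, ∀ x ∈ F (N - k), (m ^ (k + 1)) x = 0 := by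
    intro k
    induction k with
    | zero => intro _ x hx; simpa using hlast x hx
    | succ k ih =>
      intro hk x hx
      rw [pow_succ, Module.End.mul_apply]
      refine ih (by omega) _ ?_
      rw [show N - k = N - (k + 1) + 1 by omega]
      exact hstep _ (by omega) x hx
  rw [← LinearMap.ker_eq_top, eq_top_iff, ← htop]
  refine iSup_le fun i x hx => ?_
  have hi : (i : ℕ) ≤ N := Nat.lt_succ_iff.mp i.isLt
  rw [LinearMap.mem_ker, show N + 1 = i + (N - i + 1) by omega, pow_add, Module.End.mul_apply,
    hkill (N - i) (Nat.sub_le N i) x (by rwa [Nat.sub_sub_self hi]), map_zero]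

theorem isNilpotent_map_right {R M N : Type*} [CommSemiring R] [AddCommMonoid M] [Module R M]
    [AddCommMonoid N] [Module R N] (f : Module.End R M) {g : Module.End R N}
    (hg : IsNilpotent g) : IsNilpotent (map f g : Module.End R (M ⊗[R] N)) := by
  obtain ⟨n, hn⟩ := hg
  exact ⟨n, by rw [TensorProduct.map_pow, hn, map_zero_right]⟩

theorem isUnit_mulH : IsUnit mulH := by
  set h : LaurentSeries (ZMod 2) := HahnSeries.single 1 1
  have hne : h ≠ 0 := by simp [h]
  exact (Module.End.isUnit_iff _).mpr
    ⟨mul_right_injective₀ hne, fun b => ⟨h⁻¹ * b, mul_inv_cancel_left₀ hne b⟩⟩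

section TateComplex

variable {V : Type*} [AddCommGroup V] [Module (ZMod 2) V] {d ι σ : Module.End (ZMod 2) V}

theorem tateDaux_eq_map : tateDaux d ι = map 1 d + map mulH (1 + ι) := rfl

theorem tateDaux_mul_self (hdd : d * d = 0) (hii : ι * ι = 1) (hdi : d * ι = ι * d) :
    tateDaux d ι * tateDaux d ι = 0 := by
  have huu : (1 + ι) * (1 + ι) = 0 := by
    calc (1 + ι) * (1 + ι) = (1 + 1) + (ι + ι) := by
          simp only [mul_add, add_mul, hii, mul_one, one_mul]; abel
      _ = 0 := by rw [ZModModule.add_self, ZModModule.add_self, add_zero]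
  have hud : (1 + ι) * d + d * (1 + ι) = 0 := by
    rw [mul_add, add_mul, hdi, mul_one, one_mul, add_add_add_comm, ZModModule.add_self,
      ZModModule.add_self, add_zero]
  rw [tateDaux_eq_map]
  generalize 1 + ι = u at huu hud
  simp only [mul_add, add_mul, ← TensorProduct.map_mul, hdd, huu, one_mul, mul_one,
    map_zero_right, zero_add, add_zero, ← map_add_right, hud]

theorem tateDaux_homotopy (hσ : (1 + ι) * σ + σ * (1 + ι) = 1) :
    tateDaux d ι * map ↑isUnit_mulH.unit⁻¹ σ + map ↑isUnit_mulH.unit⁻¹ σ * tateDaux d ι =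
      1 + map ↑isUnit_mulH.unit⁻¹ (d * σ + σ * d) := by
  rw [tateDaux_eq_map]
  generalize 1 + ι = u at hσ
  simp only [mul_add, add_mul, ← TensorProduct.map_mul, one_mul, mul_one,
    IsUnit.mul_val_inv, IsUnit.val_inv_mul]
  rw [add_add_add_comm, ← map_add_right, ← map_add_right, hσ, TensorProduct.map_one, add_comm]

end TateComplex

theorem stmt6_general {V : Type*} [AddCommGroup V] [Module (ZMod 2) V]
    (d ι : V →ₗ[ZMod 2] V)
    (hdd : d ∘ₗ d = 0) (hii : ι ∘ₗ ι = LinearMap.id) (hdi : d ∘ₗ ι = ι ∘ₗ d)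
    (N : ℕ) (Vsub : ℕ → Submodule (ZMod 2) V)
    (hinternal : DirectSum.IsInternal (fun i : Fin (N + 1) => Vsub i.val))
    (hdstep : ∀ i < N, ∀ x ∈ Vsub i, d x ∈ Vsub (i + 1))
    (hdtop : ∀ x ∈ Vsub N, d x = 0)
    (hfree : ∀ i ≤ N, ∃ W : Submodule (ZMod 2) V,
      W ≤ Vsub i ∧ W ⊓ W.map ι = ⊥ ∧ W ⊔ W.map ι = Vsub i) :
    LinearMap.ker (tateD d ι) = LinearMap.range (tateD d ι) := by
  choose W hWV hWι hWsup using fun i : Fin (N + 1) => hfree i (Nat.lt_succ_iff.mp i.isLt)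
  have hcompl := Submodule.isCompl_iSup_map hinternal.submodule_iSupIndep
    hinternal.submodule_iSup_eq_top (fun i => disjoint_iff.mpr (hWι i)) hWsup
  obtain ⟨σ, hσ₀, hσ₁⟩ := hcompl.exists_eq_zero_and_apply_map_eq hii
  have hσV : ∀ i ≤ N, ∀ x ∈ Vsub i, σ x ∈ Vsub i := fun i hi x hx =>
    hWV ⟨i, Nat.lt_succ_of_le hi⟩ <| apply_mem_of_mem_sup_map (le_iSup W _) hσ₀ hσ₁ <|
      (hWsup ⟨i, Nat.lt_succ_of_le hi⟩).symm ▸ hx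
  have hnil : IsNilpotent (d * σ + σ * d) := ⟨N + 1, by
    refine Module.End.pow_succ_eq_zero_of_mapsTo_succ hinternal.submodule_iSup_eq_top
      (fun i hi x hx => add_mem (hdstep i hi _ (hσV i hi.le x hx))
        (hσV (i + 1) hi _ (hdstep i hi x hx))) (fun x hx => ?_)
    simp [hdtop x hx, hdtop _ (hσV N le_rfl x hx)]⟩
  have hD := LinearMap.ker_eq_range_of_isUnit_homotopy (tateDaux_mul_self hdd hii hdi) <| by
    rw [tateDaux_homotopy (one_add_mul_add_mul_one_add_eq_one hii hcompl.sup_eq_top hσ₀ hσ₁)]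
    exact (isNilpotent_map_right _ hnil).isUnit_one_add
      (R := Module.End (ZMod 2) (LaurentSeries (ZMod 2) ⊗[ZMod 2] V))
  exact Submodule.ext fun x => SetLike.ext_iff.mp hD x

/-- If a finite-dimensional ℤ/2-complex `V` decomposes as a direct sum
`V₀ ⊕ ⋯ ⊕ V_N` of ι-invariant subspaces with `d(Vᵢ) ⊆ Vᵢ₊₁`, `d(V_N) = 0`, and
each `Vᵢ = Wᵢ ⊕ ι(Wᵢ)` for some subspace `Wᵢ`, then the Tate complex of `V` is
acyclic: `ker D = im D`. -/
theorem stmt6 {V : Type*} [AddCommGroup V] [Module (ZMod 2) V]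
    [FiniteDimensional (ZMod 2) V]
    (d ι : V →ₗ[ZMod 2] V)
    (hdd : d ∘ₗ d = 0) (hii : ι ∘ₗ ι = LinearMap.id) (hdi : d ∘ₗ ι = ι ∘ₗ d)
    (N : ℕ) (Vsub : ℕ → Submodule (ZMod 2) V)
    (hinternal : DirectSum.IsInternal (fun i : Fin (N + 1) => Vsub i.val))
    (hιinv : ∀ i ≤ N, ∀ x ∈ Vsub i, ι x ∈ Vsub i)
    (hdstep : ∀ i < N, ∀ x ∈ Vsub i, d x ∈ Vsub (i + 1))
    (hdtop : ∀ x ∈ Vsub N, d x = 0)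
    (hfree : ∀ i ≤ N, ∃ W : Submodule (ZMod 2) V,
      W ≤ Vsub i ∧ W ⊓ W.map ι = ⊥ ∧ W ⊔ W.map ι = Vsub i) :
    LinearMap.ker (tateD d ι) = LinearMap.range (tateD d ι) :=
  stmt6_general d ι hdd hii hdi N Vsub hinternal hdstep hdtop hfree
end

section
/- Fix n ≥ 0 and ν ∈ ℝ^{n+1} with ν ≠ 0, and let w(s) = u(s)/‖u(s)‖ where u(s)ₖ = exp(−2ks)·νₖ. Let j be the smallest index with νⱼ ≠ 0 and m the largest index with ν_m ≠ 0. Then w(s) converges as s → +∞ to sgn(νⱼ)·eⱼ, and w(s) converges as s → −∞ to sgn(ν_m)·e_m, where e₀,…,eₙ is the standard basis of ℝ^{n+1} and sgn denotes the sign (±1) of a nonzero real number. -/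
/-!
Multiplying `u(s)` by the positive scalar `exp (2 i s)` does not change its direction and turns
its coordinates into `exp (2 (i - k) s) νₖ`. When `i` is the smallest (resp. largest) index with
`νᵢ ≠ 0`, every coordinate with `k ≠ i` tends to `0` as `s → +∞` (resp. `s → -∞`), so the
rescaled vector tends to `νᵢ eᵢ ≠ 0`, where normalization is continuous.
-/

/-- `u(s)ₖ = exp(−2ks)·νₖ`. -/
noncomputable def uCurve (n : ℕ) (ν : EuclideanSpace ℝ (Fin (n + 1))) (s : ℝ) :
    EuclideanSpace ℝ (Fin (n + 1)) :=
  WithLp.toLp 2 (fun k => Real.exp (-2 * (k : ℝ) * s) * ν k)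

/-- `w(s) = u(s)/‖u(s)‖`, the normalized curve on the unit sphere. -/
noncomputable def wCurve (n : ℕ) (ν : EuclideanSpace ℝ (Fin (n + 1))) (s : ℝ) :
    EuclideanSpace ℝ (Fin (n + 1)) :=
  ‖uCurve n ν s‖⁻¹ • uCurve n ν s

open Filter Topology NormedSpace

theorem Real.sign_eq_coe_signType_sign (r : ℝ) : Real.sign r = (SignType.sign r : ℝ) := by
  rcases lt_trichotomy r 0 with h | rfl | h
  · simp [Real.sign_of_neg h, h]
  · simp
  · simp [Real.sign_of_pos h, h]

theorem NormedSpace.continuousAt_normalize {V : Type*} [NormedAddCommGroup V] [NormedSpace ℝ V]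
    {x : V} (hx : x ≠ 0) : ContinuousAt normalize x :=
  (continuous_norm.continuousAt.inv₀ (norm_ne_zero_iff.2 hx)).smul continuousAt_id

theorem EuclideanSpace.normalize_smul_single {ι : Type*} [Fintype ι] [DecidableEq ι]
    (a : ℝ) (i : ι) :
    normalize (a • EuclideanSpace.single i (1 : ℝ)) =
      Real.sign a • EuclideanSpace.single i (1 : ℝ) := by
  rw [normalize_smul, Real.sign_eq_coe_signType_sign,
    normalize_eq_self_of_norm_eq_one (by simp)]

theorem tendsto_exp_mul_mul_atTop_of_neg {c : ℝ} (hc : c < 0) (a : ℝ) :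
    Tendsto (fun s => Real.exp (c * s) * a) atTop (𝓝 0) := by
  simpa using (Real.tendsto_exp_atBot.comp (tendsto_id.const_mul_atTop_of_neg hc)).mul_const a

theorem tendsto_exp_mul_mul_atBot_of_pos {c : ℝ} (hc : 0 < c) (a : ℝ) :
    Tendsto (fun s => Real.exp (c * s) * a) atBot (𝓝 0) := by
  simpa using (Real.tendsto_exp_atBot.comp (tendsto_id.const_mul_atBot hc)).mul_const a

theorem wCurve_eq_normalize {n : ℕ} (ν : EuclideanSpace ℝ (Fin (n + 1))) (i : Fin (n + 1)) (s : ℝ) :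
    wCurve n ν s =
      normalize (WithLp.toLp 2 fun k : Fin (n + 1) => Real.exp (2 * ((i : ℝ) - k) * s) * ν k) := by
  have : (WithLp.toLp 2 fun k : Fin (n + 1) => Real.exp (2 * ((i : ℝ) - k) * s) * ν k :
      EuclideanSpace ℝ (Fin (n + 1))) = Real.exp (2 * i * s) • uCurve n ν s := by
    ext k
    simp only [uCurve, PiLp.smul_apply, smul_eq_mul, ← mul_assoc, ← Real.exp_add]
    ring_nf
  rw [this, normalize_smul_of_pos (Real.exp_pos _)]
  rfl

theorem tendsto_wCurve_of_dominant {n : ℕ} {ν : EuclideanSpace ℝ (Fin (n + 1))} {l : Filter ℝ}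
    {i : Fin (n + 1)} (hi : ν i ≠ 0)
    (hk : ∀ k, k ≠ i → Tendsto (fun s => Real.exp (2 * ((i : ℝ) - k) * s) * ν k) l (𝓝 0)) :
    Tendsto (wCurve n ν) l (𝓝 (Real.sign (ν i) • EuclideanSpace.single i (1 : ℝ))) := by
  have hlim : Tendsto (fun s => fun k : Fin (n + 1) => Real.exp (2 * ((i : ℝ) - k) * s) * ν k) l
      (𝓝 (Pi.single i (ν i))) := by
    refine tendsto_pi_nhds.2 fun k => ?_
    rcases eq_or_ne k i with rfl | hki
    · simpa using tendsto_const_nhds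
    · simpa [hki] using hk k hki
  have hsingle : (WithLp.toLp 2 (Pi.single i (ν i)) : EuclideanSpace ℝ (Fin (n + 1))) =
      ν i • EuclideanSpace.single i 1 := by
    ext k; by_cases hki : k = i <;> simp [hki]
  have hne : ν i • EuclideanSpace.single i (1 : ℝ) ≠ 0 := by simp [hi]
  rw [← EuclideanSpace.normalize_smul_single]
  simp_rw [funext (wCurve_eq_normalize ν i)]
  refine ((continuousAt_normalize hne).tendsto).comp ?_
  rw [← hsingle]
  exact ((PiLp.continuous_toLp 2 _).tendsto _).comp hlim

/-- Asymptotics of the normalized gradient flow line `w(s) = u(s)/‖u(s)‖`: if `j`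
is the smallest index with `νⱼ ≠ 0` and `m` the largest index with `ν_m ≠ 0`,
then `w(s) → sgn(νⱼ)·eⱼ` as `s → +∞` and `w(s) → sgn(ν_m)·e_m` as `s → −∞`. -/
theorem stmt13 (n : ℕ) (ν : EuclideanSpace ℝ (Fin (n + 1)))
    (j m : Fin (n + 1))
    (hj : ν j ≠ 0) (hjmin : ∀ k, k < j → ν k = 0)
    (hm : ν m ≠ 0) (hmmax : ∀ k, m < k → ν k = 0) :
    Filter.Tendsto (wCurve n ν) Filter.atTop
      (nhds (Real.sign (ν j) • EuclideanSpace.single j (1 : ℝ))) ∧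
    Filter.Tendsto (wCurve n ν) Filter.atBot
      (nhds (Real.sign (ν m) • EuclideanSpace.single m (1 : ℝ))) := by
  constructor
  · refine tendsto_wCurve_of_dominant hj fun k hkj => ?_
    rcases hkj.lt_or_gt with hk | hk
    · simp [hjmin k hk]
    · have : (j : ℝ) < k := by exact_mod_cast hk
      exact tendsto_exp_mul_mul_atTop_of_neg (by linarith) _
  · refine tendsto_wCurve_of_dominant hm fun k hkm => ?_
    rcases hkm.lt_or_gt with hk | hk
    · have : (k : ℝ) < m := by exact_mod_cast hk
      exact tendsto_exp_mul_mul_atBot_of_pos (by linarith) _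
    · simp [hmmax k hk]
end

section
/- The subspace S = { b ∈ ℝ³ : b₁² + b₂² − b₃² ≠ 0 and b₁² + b₂² − b₃² ≠ 1 } of ℝ³ (with the subspace topology) has exactly four connected components. -/
/-!
Write `Q b = b₁² + b₂² − b₃²` (`lorentzForm`, equal to `−det B`). Then `S` is the disjoint
union of the four open sets `{Q > 1}`, `{0 < Q < 1}`, `{Q < 0, b₃ > 0}` and `{Q < 0, b₃ < 0}`,
and a partition of a space into open connected sets is its partition into connected components.
The first two sets are connected since in cylindrical coordinates `(θ, b₃, Q)` they are images of
`ℝ² × I` for an interval `I ⊆ (0, ∞)`; the third is `{b₃ > √(b₁² + b₂²)}`, the image of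
`ℝ² × (0, ∞)` under `(x, y, s) ↦ (x, y, √(x² + y²) + s)`, and the fourth is its image under
`b ↦ −b`.
-/

open Set Function Real

section OpenPartition

variable {α ι : Type*} [TopologicalSpace α] {U : ι → Set α}

theorem isClopen_of_pairwise_disjoint_of_iUnion_eq_univ (hopen : ∀ i, IsOpen (U i))
    (hdisj : Pairwise (Disjoint on U)) (hunion : ⋃ i, U i = univ) (i : ι) :
    IsClopen (U i) := by
  refine ⟨⟨?_⟩, hopen i⟩
  have : (U i)ᶜ = ⋃ (j) (_ : j ≠ i), U j := by
    ext x
    obtain ⟨k, hk⟩ := mem_iUnion.mp (hunion ▸ mem_univ x)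
    simp only [mem_compl_iff, mem_iUnion, exists_prop]
    refine ⟨fun hx => ⟨k, fun hki => hx (hki ▸ hk), hk⟩, ?_⟩
    rintro ⟨j, hji, hj⟩ hi
    exact (hdisj hji).le_bot ⟨hj, hi⟩
  rw [this]
  exact isOpen_biUnion fun j _ => hopen j

theorem natCard_connectedComponents_of_open_partition (hopen : ∀ i, IsOpen (U i))
    (hdisj : Pairwise (Disjoint on U)) (hunion : ⋃ i, U i = univ)
    (hconn : ∀ i, IsConnected (U i)) :
    Nat.card (ConnectedComponents α) = Nat.card ι :=
  Nat.card_congr <| ConnectedComponents.equivOfIsClopenOfIsConnected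
    (isClopen_of_pairwise_disjoint_of_iUnion_eq_univ hopen hdisj hunion) hdisj hunion hconn

theorem natCard_connectedComponents_iUnion (hopen : ∀ i, IsOpen (U i))
    (hdisj : Pairwise (Disjoint on U)) (hconn : ∀ i, IsConnected (U i)) :
    Nat.card (ConnectedComponents (⋃ i, U i)) = Nat.card ι := by
  have hval : IsOpenMap ((↑) : (⋃ i, U i) → α) :=
    (isOpen_iUnion hopen).isOpenMap_subtype_val
  have hsub (i : ι) : U i ⊆ range ((↑) : (⋃ i, U i) → α) := by
    rw [Subtype.range_coe]; exact subset_iUnion U i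
  refine natCard_connectedComponents_of_open_partition
    (U := fun i => ((↑) : (⋃ i, U i) → α) ⁻¹' U i)
    (fun i => (hopen i).preimage continuous_subtype_val)
    (fun i j hij => (hdisj hij).preimage _) ?_
    (fun i => (hconn i).preimage_of_isOpenMap Subtype.val_injective hval (hsub i))
  ext ⟨x, hx⟩
  simpa using hx

end OpenPartition

def lorentzForm (b : Fin 3 → ℝ) : ℝ := b 0 ^ 2 + b 1 ^ 2 - b 2 ^ 2

theorem continuous_lorentzForm : Continuous lorentzForm := by
  unfold lorentzForm; fun_prop

theorem exists_polar (x y : ℝ) :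
    ∃ θ : ℝ, √(x ^ 2 + y ^ 2) * cos θ = x ∧ √(x ^ 2 + y ^ 2) * sin θ = y := by
  have hnorm : ‖(⟨x, y⟩ : ℂ)‖ = √(x ^ 2 + y ^ 2) := by
    rw [Complex.norm_def, Complex.normSq_mk, sq, sq]
  exact ⟨Complex.arg ⟨x, y⟩, by rw [← hnorm, Complex.norm_mul_cos_arg],
    by rw [← hnorm, Complex.norm_mul_sin_arg]⟩

theorem isPreconnected_setOf_lorentzForm_mem {I : Set ℝ} (hI : IsPreconnected I)
    (hpos : I ⊆ Ioi 0) : IsPreconnected {b | lorentzForm b ∈ I} := by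
  let f : (ℝ × ℝ) × ℝ → Fin 3 → ℝ := fun p =>
    ![√(p.1.2 ^ 2 + p.2) * cos p.1.1, √(p.1.2 ^ 2 + p.2) * sin p.1.1, p.1.2]
  have himage : f '' (univ ×ˢ I) = {b | lorentzForm b ∈ I} := by
    ext b
    constructor
    · rintro ⟨⟨⟨θ, z⟩, c⟩, ⟨-, hc⟩, rfl⟩
      have hc0 : 0 < c := hpos hc
      have hsq : √(z ^ 2 + c) ^ 2 = z ^ 2 + c := sq_sqrt (by positivity)
      have : lorentzForm (f ((θ, z), c)) = c := by
        simp only [lorentzForm, f, Matrix.cons_val]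
        nlinarith [sin_sq_add_cos_sq θ]
      simpa [this] using hc
    · intro hb
      obtain ⟨θ, hcos, hsin⟩ := exists_polar (b 0) (b 1)
      have hr : b 2 ^ 2 + lorentzForm b = b 0 ^ 2 + b 1 ^ 2 := by unfold lorentzForm; ring
      refine ⟨((θ, b 2), lorentzForm b), ⟨mem_univ _, hb⟩, ?_⟩
      ext i
      fin_cases i <;> simp [f, hr, hcos, hsin]
  rw [← himage]
  exact (isPreconnected_univ.prod hI).image f (by fun_prop)

theorem isPreconnected_setOf_lorentzForm_neg_pos :
    IsPreconnected {b | lorentzForm b < 0 ∧ 0 < b 2} := by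
  let f : (ℝ × ℝ) × ℝ → Fin 3 → ℝ := fun p =>
    ![p.1.1, p.1.2, √(p.1.1 ^ 2 + p.1.2 ^ 2) + p.2]
  have hiff (b : Fin 3 → ℝ) : lorentzForm b < 0 ∧ 0 < b 2 ↔ √(b 0 ^ 2 + b 1 ^ 2) < b 2 := by
    constructor
    · rintro ⟨hQ, h2⟩
      rw [sqrt_lt' h2]
      unfold lorentzForm at hQ
      linarith
    · intro h
      have h2 : 0 < b 2 := (sqrt_nonneg _).trans_lt h
      rw [sqrt_lt' h2] at h
      exact ⟨by unfold lorentzForm; linarith, h2⟩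
  have himage : f '' (univ ×ˢ Ioi 0) = {b | lorentzForm b < 0 ∧ 0 < b 2} := by
    ext b
    simp only [mem_ofPred_eq, hiff]
    constructor
    · rintro ⟨⟨⟨x, y⟩, s⟩, ⟨-, hs⟩, rfl⟩
      simpa [f] using hs
    · intro hb
      refine ⟨((b 0, b 1), b 2 - √(b 0 ^ 2 + b 1 ^ 2)), ⟨mem_univ _, sub_pos.2 hb⟩, ?_⟩
      ext i
      fin_cases i <;> simp [f]
  rw [← himage]
  exact (isPreconnected_univ.prod isPreconnected_Ioi).image f (by fun_prop)

theorem isPreconnected_setOf_lorentzForm_neg_neg :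
    IsPreconnected {b | lorentzForm b < 0 ∧ b 2 < 0} := by
  have : {b | lorentzForm b < 0 ∧ b 2 < 0} = Neg.neg '' {b | lorentzForm b < 0 ∧ 0 < b 2} := by
    ext b
    simp [lorentzForm]
  rw [this]
  exact isPreconnected_setOf_lorentzForm_neg_pos.image _ continuous_neg.continuousOn

def lorentzRegion : Fin 4 → Set (Fin 3 → ℝ) :=
  ![{b | lorentzForm b ∈ Ioi 1}, {b | lorentzForm b ∈ Ioo 0 1},
    {b | lorentzForm b < 0 ∧ 0 < b 2}, {b | lorentzForm b < 0 ∧ b 2 < 0}]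

theorem isOpen_lorentzRegion (i : Fin 4) : IsOpen (lorentzRegion i) := by
  have hQ := continuous_lorentzForm
  fin_cases i
  · exact isOpen_Ioi.preimage hQ
  · exact isOpen_Ioo.preimage hQ
  · exact (isOpen_lt hQ continuous_const).inter (isOpen_lt continuous_const (continuous_apply 2))
  · exact (isOpen_lt hQ continuous_const).inter (isOpen_lt (continuous_apply 2) continuous_const)

theorem isConnected_lorentzRegion (i : Fin 4) : IsConnected (lorentzRegion i) := by
  constructor
  · fin_cases i <;> [use ![2, 0, 0]; use ![1 / 2, 0, 0]; use ![0, 0, 1]; use ![0, 0, -1]] <;>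
      norm_num [lorentzRegion, lorentzForm, Matrix.cons_val_two, Matrix.tail_cons,
        Matrix.head_cons]
  · fin_cases i
    exacts [isPreconnected_setOf_lorentzForm_mem isPreconnected_Ioi (Ioi_subset_Ioi zero_le_one),
      isPreconnected_setOf_lorentzForm_mem isPreconnected_Ioo Ioo_subset_Ioi_self,
      isPreconnected_setOf_lorentzForm_neg_pos, isPreconnected_setOf_lorentzForm_neg_neg]

theorem pairwise_disjoint_lorentzRegion : Pairwise (Disjoint on lorentzRegion) := by
  intro i j hij
  rw [onFun, Set.disjoint_left]
  intro b hi hj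
  fin_cases i <;> fin_cases j <;> simp_all [lorentzRegion] <;> linarith

theorem iUnion_lorentzRegion :
    ⋃ i, lorentzRegion i = {b | lorentzForm b ≠ 0 ∧ lorentzForm b ≠ 1} := by
  ext b
  have hneg : lorentzForm b < 0 → b 2 ≠ 0 := by
    intro hQ h2
    unfold lorentzForm at hQ
    rw [h2] at hQ
    nlinarith
  simp only [lorentzRegion, mem_Ioi, mem_Ioo, mem_iUnion, Fin.exists_fin_succ,
    Matrix.cons_val_zero, mem_ofPred_eq, Matrix.cons_val_succ, Matrix.cons_val_fin_one,
    exists_const, ne_eq]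
  constructor
  · rintro (h | ⟨h, h'⟩ | ⟨h, -⟩ | ⟨h, -⟩) <;> constructor <;> intro <;> linarith
  · rintro ⟨h0, h1⟩
    rcases lt_trichotomy (lorentzForm b) 0 with hQ | hQ | hQ
    · rcases (hneg hQ).lt_or_gt with h2 | h2
      · exact Or.inr (Or.inr (Or.inr ⟨hQ, h2⟩))
      · exact Or.inr (Or.inr (Or.inl ⟨hQ, h2⟩))
    · exact absurd hQ h0
    · rcases lt_or_gt_of_ne h1 with h1 | h1
      · exact Or.inr (Or.inl ⟨hQ, h1⟩)
      · exact Or.inl h1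

/-- The open subset `S = {b ∈ ℝ³ : b₁² + b₂² − b₃² ∉ {0, 1}}` of `ℝ³`
(identified with `𝔰𝔭**(ℝ²)` via `B = [[b₁, b₂+b₃],[b₂−b₃, −b₁]]`) has exactly
four connected components. -/
theorem stmt16 :
    Nat.card (ConnectedComponents
      {b : Fin 3 → ℝ //
        b 0 ^ 2 + b 1 ^ 2 - b 2 ^ 2 ≠ 0 ∧ b 0 ^ 2 + b 1 ^ 2 - b 2 ^ 2 ≠ 1}) = 4 := by
  have h := natCard_connectedComponents_iUnion isOpen_lorentzRegion
    pairwise_disjoint_lorentzRegion isConnected_lorentzRegion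
  rw [iUnion_lorentzRegion, Nat.card_fin] at h
  exact h
end

section
/- Fix n ≥ 1 and let A be a real 2n×2n symplectic matrix (A·J·Aᵀ = J, where J = [[0, −I],[I, 0]]). If det(I − A) < 0, then A has a real eigenvalue in the open interval (0,1): there exists λ ∈ ℝ with 0 < λ < 1 and det(λ·I − A) = 0. -/
open Matrix

/-- The standard symplectic matrix `J = [[0, −I],[I, 0]]` on `ℝ^{2n}`. -/
noncomputable def Jstd (n : ℕ) : Matrix (Fin n ⊕ Fin n) (Fin n ⊕ Fin n) ℝ :=
  Matrix.fromBlocks 0 (-1) 1 0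

lemma Jstd_mul_neg_Jstd (n : ℕ) : Jstd n * (-(Jstd n)) = 1 := by
  simp [Jstd, Matrix.fromBlocks_multiply, Matrix.fromBlocks_neg, ← Matrix.fromBlocks_one]

/-- If a real symplectic matrix `A` satisfies `det(I − A) < 0`, then `A` has a
real eigenvalue in the open interval `(0, 1)`. -/
theorem stmt18 (n : ℕ) (hn : 1 ≤ n)
    (A : Matrix (Fin n ⊕ Fin n) (Fin n ⊕ Fin n) ℝ)
    (hA : A * Jstd n * Aᵀ = Jstd n)
    (hdet : (1 - A).det < 0) :
    ∃ lam : ℝ, 0 < lam ∧ lam < 1 ∧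
      (lam • (1 : Matrix (Fin n ⊕ Fin n) (Fin n ⊕ Fin n) ℝ) - A).det = 0 := by
  set J := Jstd n with hJ
  have hJJ : J * (-J) = 1 := Jstd_mul_neg_Jstd n
  -- A is invertible with inverse B
  set B := J * Aᵀ * (-J) with hB
  have hAB : A * B = 1 := by
    calc A * B = (A * J * Aᵀ) * (-J) := by rw [hB]; noncomm_ring
    _ = 1 := by rw [hA, hJJ]
  -- B - 1 = J * (Aᵀ - 1) * (-J)
  have hB1 : B - 1 = J * (Aᵀ - 1) * (-J) := by
    rw [mul_sub, mul_one, sub_mul, hJJ, hB]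
  have heven : Even (Fintype.card (Fin n ⊕ Fin n)) := by
    simp [Fintype.card_sum]
  have hdetB1 : (B - 1).det = (1 - A).det := by
    rw [hB1, Matrix.det_mul, Matrix.det_mul]
    have : J.det * (Aᵀ - 1).det * (-J).det = J.det * (-J).det * (Aᵀ - 1).det := by ring
    rw [this, ← Matrix.det_mul, hJJ, Matrix.det_one, one_mul]
    have h1 : Aᵀ - 1 = (A - 1)ᵀ := by simp
    rw [h1, Matrix.det_transpose]
    have h2 : A - 1 = -(1 - A) := (neg_sub _ _).symm
    rw [h2, Matrix.det_neg, heven.neg_one_pow, one_mul]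
  -- det A = 1
  have hdA : A.det = 1 := by
    have key : (1 - A).det = A.det * (1 - A).det := by
      have h3 : A * (B - 1) = 1 - A := by rw [mul_sub, hAB, mul_one]
      calc (1 - A).det = (A * (B - 1)).det := by rw [h3]
      _ = A.det * (B - 1).det := Matrix.det_mul _ _
      _ = A.det * (1 - A).det := by rw [hdetB1]
    have hne : (1 - A).det ≠ 0 := ne_of_lt hdet
    field_simp at key
    nlinarith [key]
  -- IVT
  set f : ℝ → ℝ := fun lam => (lam • (1 : Matrix (Fin n ⊕ Fin n) (Fin n ⊕ Fin n) ℝ) - A).det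
    with hf
  have hcont : Continuous f := by
    apply Continuous.matrix_det
    exact (continuous_id.smul continuous_const).sub continuous_const
  have hf0 : f 0 = 1 := by
    simp only [hf, zero_smul, zero_sub]
    rw [Matrix.det_neg, heven.neg_one_pow, one_mul, hdA]
  have hf1 : f 1 = (1 - A).det := by simp [hf]
  have hsub : Set.Ioo (f 1) (f 0) ⊆ f '' Set.Ioo (0:ℝ) 1 :=
    intermediate_value_Ioo' (by norm_num) hcont.continuousOn
  have h0 : (0:ℝ) ∈ Set.Ioo (f 1) (f 0) := by
    rw [hf0, hf1]; exact ⟨hdet, one_pos⟩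
  obtain ⟨lam, hlam, hflam⟩ := hsub h0
  exact ⟨lam, hlam.1, hlam.2, hflam⟩
end

section
/- Let R = 𝔽₂[h] be the polynomial ring over the field with two elements, and let C be the free R-module with basis e₀, e₁, e₂, e₃. Define the R-linear map D : C → C by D(e₀) = D(e₁) = e₂ + e₃ + h·(e₀ + e₁) and D(e₂) = D(e₃) = e₀ + e₁ + h·(e₂ + e₃). Then D∘D = 0, and the homology ker D / im D is isomorphic as an R-module to R/(h² + 1). -/
/-- Basis vector `eᵢ` of the free module `𝔽₂[h]⁴`. -/
noncomputable def e (i : Fin 4) : Fin 4 → Polynomial (ZMod 2) :=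
  Pi.single i 1

/-- The variable `h` of `𝔽₂[h]`. -/
noncomputable def hvar : Polynomial (ZMod 2) := Polynomial.X

/-!
The differential factors as `D = Pᵀ ∘ M ∘ P`, where `P x = (x₀ + x₁, x₂ + x₃)` and
`M = [[h, 1], [1, h]]`. In characteristic 2, `Pᵀ (a, b) = (a, a, b, b)` and
`0 → 𝔽₂[h]² --Pᵀ--> 𝔽₂[h]⁴ --P--> 𝔽₂[h]² → 0` is exact, so `D² = 0`. As `Pᵀ` is injective, `P` surjective
and `det M = h² - 1` is a non-zero-divisor, `ker D = ker P = im Pᵀ` and `im D = Pᵀ (im M)`,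
so the homology of `D` is the cokernel of `M`, namely `𝔽₂[h] ⧸ (det M) = 𝔽₂[h] ⧸ (h² + 1)`.
-/

open Matrix

section Factorization

variable {R C V W : Type*} [Ring R] [AddCommGroup C] [AddCommGroup V] [AddCommGroup W]
  [Module R C] [Module R V] [Module R W] {σ : C →ₗ[R] V} {M : V →ₗ[R] W} {δ : W →ₗ[R] C}

theorem comp_self_eq_zero_of_comp_eq_zero (h : σ ∘ₗ δ = 0) :
    (δ ∘ₗ M ∘ₗ σ) ∘ₗ (δ ∘ₗ M ∘ₗ σ) = 0 := by
  ext x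
  simp [show σ (δ (M (σ x))) = 0 from LinearMap.congr_fun h _]

theorem ker_comp_eq_ker (hδ : Function.Injective δ) (hM : Function.Injective M) :
    LinearMap.ker (δ ∘ₗ M ∘ₗ σ) = LinearMap.ker σ := by
  ext x
  simp [hδ.eq_iff' (map_zero δ), hM.eq_iff' (map_zero M)]

theorem range_comp_eq_map (hσ : Function.Surjective σ) :
    LinearMap.range (δ ∘ₗ M ∘ₗ σ) = (LinearMap.range M).map δ := by
  rw [LinearMap.range_comp, LinearMap.range_comp, LinearMap.range_eq_top.mpr hσ,
    Submodule.map_top]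

noncomputable def homologyEquivOfFactor (hexact : Function.Exact δ σ)
    (hσ : Function.Surjective σ) (hM : Function.Injective M) (hδ : Function.Injective δ) :
    (LinearMap.ker (δ ∘ₗ M ∘ₗ σ) ⧸
        (LinearMap.range (δ ∘ₗ M ∘ₗ σ)).comap (LinearMap.ker (δ ∘ₗ M ∘ₗ σ)).subtype)
      ≃ₗ[R] W ⧸ LinearMap.range M := by
  set D := δ ∘ₗ M ∘ₗ σ
  let toCycles : W →ₗ[R] LinearMap.ker D :=
    δ.codRestrict _ fun w => by
      rw [ker_comp_eq_ker hδ hM, LinearMap.mem_ker]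
      exact hexact.apply_apply_eq_zero w
  let ψ := ((LinearMap.range D).comap (LinearMap.ker D).subtype).mkQ ∘ₗ toCycles
  have hψ : Function.Surjective ψ := by
    rintro ⟨⟨x, hx⟩⟩
    rw [ker_comp_eq_ker hδ hM, LinearMap.mem_ker, hexact] at hx
    obtain ⟨w, rfl⟩ := hx
    exact ⟨w, rfl⟩
  have hkerψ : LinearMap.ker ψ = LinearMap.range M := by
    ext w
    simp only [ψ, LinearMap.mem_ker, LinearMap.comp_apply, Submodule.mkQ_apply,
      Submodule.Quotient.mk_eq_zero, Submodule.mem_comap, Submodule.subtype_apply,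
      toCycles, LinearMap.codRestrict_apply, D, range_comp_eq_map hσ,
      Submodule.mem_map, hδ.eq_iff, exists_eq_right]
  exact ((Submodule.quotEquivOfEq _ _ hkerψ.symm).trans (ψ.quotKerEquivOfSurjective hψ)).symm

end Factorization

section Cokernel

variable {R : Type*} [CommRing R] (a b : R)

theorem offDiagOne_mulVec (v : Fin 2 → R) :
    !![a, 1; 1, b] *ᵥ v = ![a * v 0 + v 1, v 0 + b * v 1] := by
  ext i; fin_cases i <;> simp [mulVec, dotProduct, Fin.sum_univ_two]

theorem injective_toLin'_of_mul_ne_one [IsDomain R] (hab : a * b ≠ 1) :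
    Function.Injective (toLin' !![a, 1; 1, b]) := by
  rw [← LinearMap.ker_eq_bot, LinearMap.ker_eq_bot']
  intro v hv
  rw [toLin'_apply, offDiagOne_mulVec] at hv
  have h0 : a * v 0 + v 1 = 0 := congrFun hv 0
  have h1 : v 0 + b * v 1 = 0 := congrFun hv 1
  have hv1 : v 1 = 0 := by
    have : (a * b - 1) * v 1 = 0 := by linear_combination a * h1 - h0
    exact (mul_eq_zero.mp this).resolve_left (sub_ne_zero.mpr hab)
  have hv0 : v 0 = 0 := by linear_combination h1 - b * hv1
  ext i; fin_cases i <;> simp [hv0, hv1]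

/-- The cokernel is read off through `(x, y) ↦ x - a y`, which kills `M (u, v)` up to
`(1 - a b) v`. -/
noncomputable def quotRangeToLin'Equiv :
    ((Fin 2 → R) ⧸ LinearMap.range (toLin' !![a, 1; 1, b])) ≃ₗ[R]
      R ⧸ Ideal.span {a * b - 1} := by
  let φ := (Ideal.span {a * b - 1}).mkQ ∘ₗ
    (LinearMap.proj (R := R) (φ := fun _ : Fin 2 => R) 0 - a • LinearMap.proj 1)
  have hφ : Function.Surjective φ := by
    intro c
    obtain ⟨r, rfl⟩ := Submodule.Quotient.mk_surjective _ c
    exact ⟨![r, 0], by simp [φ]⟩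
  have hker : LinearMap.ker φ = LinearMap.range (toLin' !![a, 1; 1, b]) := by
    ext v
    simp only [φ, LinearMap.mem_ker, LinearMap.comp_apply, Submodule.mkQ_apply,
      LinearMap.sub_apply, LinearMap.smul_apply, LinearMap.proj_apply, smul_eq_mul,
      Submodule.Quotient.mk_eq_zero, Ideal.mem_span_singleton', LinearMap.mem_range,
      toLin'_apply, offDiagOne_mulVec]
    constructor
    · rintro ⟨q, hq⟩
      refine ⟨![v 1 + b * q, -q], ?_⟩
      ext i; fin_cases i
      · simp only [Fin.zero_eta, Fin.isValue, cons_val_zero, cons_val_one]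
        linear_combination hq
      · simp
    · rintro ⟨w, rfl⟩
      exact ⟨-w 1, by simp; ring⟩
  exact (Submodule.quotEquivOfEq _ _ hker.symm).trans (φ.quotKerEquivOfSurjective hφ)

end Cokernel

section PairSum

variable (R : Type*) [CommRing R]

def pairSum : Matrix (Fin 2) (Fin 4) R := !![1, 1, 0, 0; 0, 0, 1, 1]

variable {R}

theorem pairSum_mulVec (x : Fin 4 → R) : pairSum R *ᵥ x = ![x 0 + x 1, x 2 + x 3] := by
  ext i; fin_cases i <;> simp [pairSum, mulVec, dotProduct, Fin.sum_univ_four]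

theorem pairSum_transpose_mulVec (v : Fin 2 → R) :
    (pairSum R)ᵀ *ᵥ v = ![v 0, v 0, v 1, v 1] := by
  ext i; fin_cases i <;> simp [pairSum, mulVec, dotProduct, Fin.sum_univ_two]

theorem surjective_toLin'_pairSum : Function.Surjective (toLin' (pairSum R)) := by
  intro v
  refine ⟨![v 0, 0, v 1, 0], ?_⟩
  ext i; fin_cases i <;> simp [pairSum_mulVec]

theorem injective_toLin'_pairSum_transpose : Function.Injective (toLin' (pairSum R)ᵀ) := by
  intro v w h
  simp only [toLin'_apply, pairSum_transpose_mulVec] at h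
  ext i; fin_cases i
  · exact congrFun h 0
  · exact congrFun h 2

theorem exact_toLin'_pairSum [CharP R 2] :
    Function.Exact (toLin' (pairSum R)ᵀ) (toLin' (pairSum R)) := by
  intro x
  simp only [toLin'_apply, pairSum_mulVec, Set.mem_range, pairSum_transpose_mulVec]
  constructor
  · intro h
    have h01 : x 0 = x 1 := CharTwo.add_eq_zero.mp (congrFun h 0)
    have h23 : x 2 = x 3 := CharTwo.add_eq_zero.mp (congrFun h 1)
    refine ⟨![x 0, x 2], ?_⟩
    ext i; fin_cases i <;> simp [h01, h23]
  · rintro ⟨v, rfl⟩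
    ext i; fin_cases i <;> simp [CharTwo.add_self_eq_zero]

theorem pairSum_factor_apply (a b : R) (x : Fin 4 → R) :
    (toLin' (pairSum R)ᵀ ∘ₗ toLin' !![a, 1; 1, b] ∘ₗ toLin' (pairSum R)) x =
      ![a * (x 0 + x 1) + (x 2 + x 3), a * (x 0 + x 1) + (x 2 + x 3),
        (x 0 + x 1) + b * (x 2 + x 3), (x 0 + x 1) + b * (x 2 + x 3)] := by
  simp only [LinearMap.comp_apply, toLin'_apply, pairSum_mulVec, offDiagOne_mulVec,
    pairSum_transpose_mulVec]
  simp

end PairSum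

/-- The polynomial ℤ/2-equivariant Floer complex of the pair
(ℝ², Clifford torus) in ℂ²: on the free `𝔽₂[h]`-module with basis
`e₀, e₁, e₂, e₃`, the `𝔽₂[h]`-linear map `D` with
`D(e₀) = D(e₁) = e₂ + e₃ + h·(e₀ + e₁)` and `D(e₂) = D(e₃) = e₀ + e₁ + h·(e₂ + e₃)`
squares to zero, and its homology `ker D / im D` is isomorphic as an
`𝔽₂[h]`-module to `𝔽₂[h]/(h² + 1)`. -/
theorem stmt19
    (D : (Fin 4 → Polynomial (ZMod 2)) →ₗ[Polynomial (ZMod 2)]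
      (Fin 4 → Polynomial (ZMod 2)))
    (hD0 : D (e 0) = e 2 + e 3 + hvar • (e 0 + e 1))
    (hD1 : D (e 1) = e 2 + e 3 + hvar • (e 0 + e 1))
    (hD2 : D (e 2) = e 0 + e 1 + hvar • (e 2 + e 3))
    (hD3 : D (e 3) = e 0 + e 1 + hvar • (e 2 + e 3)) :
    D ∘ₗ D = 0 ∧
    Nonempty
      ((↥(LinearMap.ker D) ⧸
          Submodule.comap (LinearMap.ker D).subtype (LinearMap.range D))
        ≃ₗ[Polynomial (ZMod 2)]
       (Polynomial (ZMod 2) ⧸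
          Ideal.span {(Polynomial.X : Polynomial (ZMod 2)) ^ 2 + 1})) := by
  have hfactor :
      D = toLin' (pairSum _)ᵀ ∘ₗ toLin' !![hvar, 1; 1, hvar] ∘ₗ toLin' (pairSum _) := by
    have hDe : ∀ i, D (e i) =
        (toLin' (pairSum _)ᵀ ∘ₗ toLin' !![hvar, 1; 1, hvar] ∘ₗ toLin' (pairSum _)) (e i) := by
      intro i
      fin_cases i <;>
        simp only [Fin.zero_eta, Fin.mk_one, Fin.reduceFinMk, hD0, hD1, hD2, hD3,
          pairSum_factor_apply] <;>
        funext j <;> fin_cases j <;> simp [e, hvar]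
    exact (Pi.basisFun _ (Fin 4)).ext fun i => by rw [Pi.basisFun_apply]; exact hDe i
  have hdet : hvar * hvar ≠ 1 := by
    rw [hvar, ← sq]
    intro h
    simpa using congrArg Polynomial.natDegree h
  have hspan : Ideal.span {hvar * hvar - 1} = Ideal.span {Polynomial.X ^ 2 + 1} := by
    rw [CharTwo.sub_eq_add, hvar, sq]
  subst hfactor
  exact ⟨comp_self_eq_zero_of_comp_eq_zero exact_toLin'_pairSum.linearMap_comp_eq_zero,
    ⟨(homologyEquivOfFactor exact_toLin'_pairSum surjective_toLin'_pairSum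
      (injective_toLin'_of_mul_ne_one _ _ hdet) injective_toLin'_pairSum_transpose).trans
      ((quotRangeToLin'Equiv _ _).trans (Submodule.quotEquivOfEq _ _ hspan))⟩⟩
end
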